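/- arXiv:1110.3887 — 6 statements merged into one kernel-verified Lean document; each statement's English description precedes it below -/
import Mathlib

section
/- The linking matrix of a nanophrase is invariant under an H1 move: if p' is obtained from p by deleting a subword AA (removing the letter A from the alphabet), then L(p) = L(p'). -/
/-! Nanophrases over `α` (flat representation: `some A` is an occurrence of
the letter `A`, `none` is the separator between components), the abelian
group `π` generated by `α` with relations `a + τ a = 0`, and the linking
matrix. -/

/-- A nanophrase over `α`. -/
structure Nanophrase (α : Type*) where
  proj : ℕ → α
  seq : List (Option ℕ)

namespace Nanophrase

/-- The list of occurrences `(component index, letter)`, components being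
numbered starting from `1`. -/
def occAux : ℕ → List (Option ℕ) → List (ℕ × ℕ)
  | _, [] => []
  | k, none :: t => occAux (k + 1) t
  | k, some a :: t => (k, a) :: occAux k t

/-- The occurrences of a nanophrase, as pairs `(component, letter)`. -/
def occ {α : Type*} (p : Nanophrase α) : List (ℕ × ℕ) := occAux 1 p.seq

/-- The (finite) set of letters appearing in a nanophrase. -/
def letters {α : Type*} (p : Nanophrase α) : Finset ℕ :=
  (p.occ.map Prod.snd).toFinset

/-- A nanophrase is Gauss when every letter appearing in it appears
exactly twice. -/
def IsGauss {α : Type*} (p : Nanophrase α) : Prop :=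
  ∀ a : ℕ, some a ∈ p.seq → p.seq.count (some a) = 2

end Nanophrase

variable (α : Type*) (τ : α → α)

/-- The abelian group `π` generated by the elements of `α` subject to the
relations `a + τ a = 0`. -/
abbrev piGroup := FreeAbelianGroup α ⧸
  AddSubgroup.closure {x : FreeAbelianGroup α |
    ∃ a, x = FreeAbelianGroup.of a + FreeAbelianGroup.of (τ a)}

/-- The canonical map `α → π`. -/
def toPi (a : α) : piGroup α τ := QuotientAddGroup.mk (FreeAbelianGroup.of a)

namespace Nanophrase

variable {α}

/-- `A_{ij}(p)`: the set of letters having one occurrence in the `i`-th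
component and the other in the `j`-th component of `p`. -/
def Aij (p : Nanophrase α) (i j : ℕ) : Finset ℕ :=
  p.letters.filter (fun a => (i, a) ∈ p.occ ∧ (j, a) ∈ p.occ)

/-- The entries `l_{ij}(p)` of the linking matrix: `l_{ii}(p) = 0` and for
`i ≠ j`, `l_{ij}(p) = ∑_{A ∈ A_{ij}(p)} |A|` in `π`. -/
noncomputable def lij (p : Nanophrase α) (i j : ℕ) : piGroup α τ :=
  if i = j then 0 else ∑ a ∈ p.Aij i j, toPi α τ (p.proj a)

lemma occAux_append (k : ℕ) (l₁ l₂ : List (Option ℕ)) :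
    occAux k (l₁ ++ l₂) = occAux k l₁ ++ occAux (k + l₁.count none) l₂ := by
  induction l₁ generalizing k with
  | nil => simp [occAux]
  | cons h t ih =>
    cases h with
    | none => simp [occAux, ih, List.count_cons]; ring_nf
    | some a => simp [occAux, ih, List.count_cons]

lemma mem_occAux_of_mem {k i a : ℕ} {l : List (Option ℕ)}
    (h : (i, a) ∈ occAux k l) : some a ∈ l := by
  induction l generalizing k with
  | nil => simp [occAux] at h
  | cons hd t ih =>
    cases hd with
    | none => simp [occAux] at h; exact List.mem_cons_of_mem _ (ih h)
    | some b =>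
      simp [occAux] at h
      rcases h with ⟨_, rfl⟩ | h
      · exact List.mem_cons_self
      · exact List.mem_cons_of_mem _ (ih h)

end Nanophrase

/-- the linking matrix is invariant under an H1 move: if
`p'` is obtained from the Gauss nanophrase `p` by deleting an adjacent pair
`AA` (removing the letter `A` from the alphabet), then `L(p) = L(p')`. -/
theorem Nanophrase.lij_h1_invariant (p p' : Nanophrase α)
    (hp : p.IsGauss) (hp' : p'.IsGauss)
    (hmove : ∃ (x y : List (Option ℕ)) (A : ℕ),
      p.seq = x ++ [some A, some A] ++ y ∧
      p'.seq = x ++ y ∧ p'.proj = p.proj) :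
    ∀ i j : ℕ, p.lij τ i j = p'.lij τ i j := by
  obtain ⟨x, y, A, hpseq, hp'seq, hproj⟩ := hmove
  intro i j
  unfold lij
  by_cases hij : i = j
  · simp [hij]
  · simp only [if_neg hij]
    set k := 1 + x.count none with hk
    -- occurrences of p
    have hoccp : p.occ = occAux 1 x ++ ((k, A) :: (k, A) :: occAux k y) := by
      rw [occ, hpseq, List.append_assoc, occAux_append]
      simp [occAux, hk]
    have hoccp' : p'.occ = occAux 1 x ++ occAux k y := by
      rw [occ, hp'seq, occAux_append]
    -- A occurs only in the middle
    have hA2 : p.seq.count (some A) = 2 := by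
      apply hp; rw [hpseq]; simp
    have hAx : some A ∉ x ∧ some A ∉ y := by
      rw [hpseq] at hA2
      simp [List.count_append, List.count_cons] at hA2
      constructor <;> intro h <;>
        [have := List.count_pos_iff.mpr h;
         have := List.count_pos_iff.mpr h] <;> omega
    have hAocc' : ∀ m : ℕ, (m, A) ∉ p'.occ := by
      intro m hm
      rw [hoccp', List.mem_append] at hm
      rcases hm with hm | hm
      · exact hAx.1 (mem_occAux_of_mem hm)
      · exact hAx.2 (mem_occAux_of_mem hm)
    -- membership in occ p versus occ p'
    have hmem : ∀ m a : ℕ, (m, a) ∈ p.occ ↔ (m, a) = (k, A) ∨ (m, a) ∈ p'.occ := by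
      intro m a
      rw [hoccp, hoccp']
      simp [or_assoc]
      tauto
    have hAij : p.Aij i j = p'.Aij i j := by
      ext a
      simp only [Aij, Finset.mem_filter, letters, List.mem_toFinset, List.mem_map]
      constructor
      · rintro ⟨_, hi, hj⟩
        by_cases haA : a = A
        · subst haA
          rw [hmem] at hi hj
          rcases hi with hi | hi
          · rcases hj with hj | hj
            · exact absurd (by rw [Prod.mk.injEq] at hi hj; omega : i = j) hij
            · exact absurd hj (hAocc' j)
          · exact absurd hi (hAocc' i)
        · rw [hmem] at hi hj
          rcases hi with hi | hi
          · exact absurd (Prod.mk.injEq .. ▸ hi).2 haA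
          rcases hj with hj | hj
          · exact absurd (Prod.mk.injEq .. ▸ hj).2 haA
          exact ⟨⟨(i, a), hi, rfl⟩, hi, hj⟩
      · rintro ⟨_, hi, hj⟩
        exact ⟨⟨(i, a), (hmem i a).mpr (Or.inr hi), rfl⟩,
          (hmem i a).mpr (Or.inr hi), (hmem j a).mpr (Or.inr hj)⟩
    rw [hAij, hproj]
end

section
/- For the 2-component nanophrase p = A₁B₁A₂B₂⋯AₙBₙ | A₁B₁A₂B₂⋯AₙBₙ with |A_j| = b₊ and |B_j| = a₊ for all j (corresponding to the (2n,2) torus link), one has μ(p;2,1) = n and μ(p;1,2) = n. -/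
/-! Nanophrases over `α_v = {a₊, a₋, b₊, b₋}` and the Milnor-type
invariants `μ`, `Δ`, `μ̄`.

A nanophrase is given by its list of components (words on letters labelled
by natural numbers, each letter appearing exactly twice in total) together
with a projection to `α_v`.  Components are numbered starting from `1`.

Formal power series in non-commuting variables `κ₁, κ₂, …` are represented
by their coefficient functions on monomials (lists of indices). -/

/-- The set `α_v = {a₊, a₋, b₊, b₋}`. -/
inductive AlphaV : Type
  | ap | am | bp | bm
  deriving DecidableEq

/-- A nanophrase over `α_v`: a list of components and a projection. -/
structure NanophraseV : Type where
  comps : List (List ℕ)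
  proj : ℕ → AlphaV

namespace NanophraseV

/-- The occurrences of the letter `a` in `P`, as pairs
`(component index, position)`, in lexicographic order; components are
numbered from `1`. -/
def occs (P : NanophraseV) (a : ℕ) : List (ℕ × ℕ) :=
  (P.comps.zipIdx.map Prod.swap).flatMap fun iw =>
    (iw.2.zipIdx.map Prod.swap).filterMap fun jb =>
      if jb.2 = a then some (iw.1 + 1, jb.1) else none

/-- `P` is a Gauss phrase: every letter appearing in `P` appears exactly
twice. -/
def IsGauss (P : NanophraseV) : Prop :=
  ∀ a ∈ P.comps.flatten, (P.occs a).length = 2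

/-- The first (earlier) occurrence of a letter. -/
def fstOcc (P : NanophraseV) (a : ℕ) : ℕ × ℕ := (P.occs a).getD 0 (0, 0)

/-- The second (later) occurrence of a letter. -/
def sndOcc (P : NanophraseV) (a : ℕ) : ℕ × ℕ := (P.occs a).getD 1 (0, 0)

/-- The sign `ε` of the occurrence of the letter `a` at position `j` of the
`i`-th component (`some true` for `+1`, `some false` for `-1`, `none` for
`0`): if the two occurrences lie in distinct components, the earlier
occurrence gets `+1` when `|a| = b₊` and `-1` when `|a| = a₋`, and the
later occurrence gets `+1` when `|a| = a₊` and `-1` when `|a| = b₋`;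
all other signs are `0`. -/
def entrySign (P : NanophraseV) (i j a : ℕ) : Option Bool :=
  if (P.fstOcc a).1 = (P.sndOcc a).1 then none
  else if (i, j) = P.fstOcc a then
    (if P.proj a = AlphaV.bp then some true
     else if P.proj a = AlphaV.am then some false else none)
  else
    (if P.proj a = AlphaV.ap then some true
     else if P.proj a = AlphaV.bm then some false else none)

/-- The signed `i`-th component of `P`, keeping track of positions:
the list of `(position, letter, sign)` for the occurrences with sign
`ε ≠ 0`. -/
def signedCompPos (P : NanophraseV) (i : ℕ) : List (ℕ × ℕ × Bool) :=
  ((P.comps.getD (i - 1) []).zipIdx.map Prod.swap).filterMap fun jb =>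
    (P.entrySign i jb.1 jb.2).map fun s => (jb.1, jb.2, s)

/-- The signed `i`-th component `w_i^ε` of `P`, as a word on
`𝒜 ∪ 𝒜⁻¹` (a letter with sign `true` is `A`, with sign `false` is
`A⁻¹`). -/
def signedComp (P : NanophraseV) (i : ℕ) : List (ℕ × Bool) :=
  (P.signedCompPos i).map fun e => (e.2.1, e.2.2)

/-- The occurrence of the letter `a` carrying sign `0`. -/
def zeroOcc (P : NanophraseV) (a : ℕ) : ℕ × ℕ :=
  if P.proj a = AlphaV.bp ∨ P.proj a = AlphaV.am then P.sndOcc a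
  else P.fstOcc a

/-- `η(a) = a_k`, where `k` is the component containing the occurrence of
`a` with sign `0`. -/
def eta (P : NanophraseV) (a : ℕ) : ℕ := (P.zeroOcc a).1

/-- The word `x_a`: the prefix of the signed component `w_k^ε` before the
sign-`0` occurrence `(k, l)` of the letter `a`. -/
def xword (P : NanophraseV) (a : ℕ) : List (ℕ × Bool) :=
  ((P.signedCompPos (P.zeroOcc a).1).filter
    (fun e => e.1 < (P.zeroOcc a).2)).map fun e => (e.2.1, e.2.2)

/-- Inverse of a word on `𝒜 ∪ 𝒜⁻¹`:
`(A₁ ⋯ A_m)⁻¹ = A_m⁻¹ ⋯ A₁⁻¹`. -/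
def wInv (w : List (ℕ × Bool)) : List (ℕ × Bool) :=
  w.reverse.map fun e => (e.1, !e.2)

/-- The expanding words `ρ^q`: `ρ²(A^±) = A^±` and
`ρ^q(A^±) = ρ^{q-1}(x_A⁻¹) A^± ρ^{q-1}(x_A)` for `q ≥ 3`, extended
multiplicatively over words. -/
def rho (P : NanophraseV) : ℕ → List (ℕ × Bool) → List (ℕ × Bool)
  | 0, w => w
  | 1, w => w
  | 2, w => w
  | q + 3, w =>
    w.flatMap fun e =>
      wInv (rho P (q + 2) (P.xword e.1)) ++ e :: rho P (q + 2) (P.xword e.1)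

end NanophraseV

/-- Formal power series in non-commuting variables `κ₁, κ₂, …` with integer
coefficients, as coefficient functions on monomials. -/
def NCS : Type := List ℕ → ℤ

/-- The convolution product of power series. -/
def NCS.mul (f g : NCS) : NCS :=
  fun w => ∑ i ∈ Finset.range (w.length + 1), f (w.take i) * g (w.drop i)

/-- The power series `1`. -/
def NCS.one : NCS := fun w => if w = [] then 1 else 0

/-- The power series `1 + κ_k`, the value `φ(a_k)` of the Magnus
expansion. -/
def NCS.onePlus (k : ℕ) : NCS := fun w => if w = [] ∨ w = [k] then 1 else 0

/-- The power series `1 - κ_k + κ_k² - ⋯`, the value `φ(a_k⁻¹)`. -/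
def NCS.invSer (k : ℕ) : NCS :=
  fun w => if w = List.replicate w.length k then (-1) ^ w.length else 0

namespace NanophraseV

/-- `φ ∘ η` applied to a word on `𝒜 ∪ 𝒜⁻¹`: each letter `A^{±1}` is sent to
`φ(a_{η(A)}^{±1})` and the resulting series are multiplied in order. -/
def phiEta (P : NanophraseV) (m : List (ℕ × Bool)) : NCS :=
  (m.map fun e =>
    if e.2 then NCS.onePlus (P.eta e.1) else NCS.invSer (P.eta e.1)).foldr
    NCS.mul NCS.one

/-- The Milnor-type invariant `μ(P; c₁, …, c_u, i)`: the (stabilized)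
coefficient of `κ_{c₁} ⋯ κ_{c_u}` in `lim_q φ∘η(ρ^q(w_i^ε))`, computed at
`q = u + 2`. -/
def mu (P : NanophraseV) (cs : List ℕ) (i : ℕ) : ℤ :=
  P.phiEta (P.rho (cs.length + 2) (P.signedComp i)) cs

/-- `μ` of a nonempty sequence `(d₁, …, d_{t-1}, d_t)`, the last entry
being the component index. -/
def muSeq (P : NanophraseV) (d : List ℕ) : ℤ :=
  P.mu d.dropLast ((d.getLast?).getD 0)

/-- `Δ(P; c₁, …, c_u, i)`: the greatest common divisor of the
`μ(P; d₁, …, d_t)` (`2 ≤ t ≤ u`), where `(d₁, …, d_t)` ranges over all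
sequences obtained from `(c₁, …, c_u, i)` by deleting at least one index
and permuting the remaining indices cyclically. -/
def Delta (P : NanophraseV) (cs : List ℕ) (i : ℕ) : ℕ :=
  ((((cs ++ [i]).sublists.filter fun e =>
      2 ≤ e.length ∧ e.length < cs.length + 1).flatMap
    fun e => (List.range e.length).map e.rotate).map
      fun d => (P.muSeq d).natAbs).foldr Nat.gcd 0

end NanophraseV

/-- The 2-component nanophrase
`p = A₁B₁A₂B₂⋯AₙBₙ | A₁B₁A₂B₂⋯AₙBₙ` with `|A_j| = b₊` and `|B_j| = a₊`
(letters `A_j` labelled `j` and `B_j` labelled `n + j`, `1 ≤ j ≤ n`),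
corresponding to the `(2n, 2)` torus link. -/
def torusLink (n : ℕ) : NanophraseV :=
  ⟨[(List.range n).flatMap fun j => [j + 1, n + j + 1],
    (List.range n).flatMap fun j => [j + 1, n + j + 1]],
   fun a => if a ≤ n then AlphaV.bp else AlphaV.ap⟩

section Aux
open NanophraseV List

/-- The contribution of a signed letter to the coefficient of `κ_k`. -/
def val (P : NanophraseV) (k : ℕ) (e : ℕ × Bool) : ℤ :=
  if P.eta e.1 = k then (if e.2 then 1 else -1) else 0

lemma ncs_mul_nil (f g : NCS) : NCS.mul f g [] = f [] * g [] := by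
  simp [NCS.mul]

lemma ncs_mul_single (f g : NCS) (k : ℕ) :
    NCS.mul f g [k] = f [] * g [k] + f [k] * g [] := by
  show ∑ i ∈ Finset.range 2, f (([k]).take i) * g (([k]).drop i) = _
  simp [Finset.sum_range_succ]

lemma foldr_eval_nil (L : List NCS) (h : ∀ f ∈ L, f [] = 1) :
    (L.foldr NCS.mul NCS.one) [] = 1 := by
  induction L with
  | nil => simp [NCS.one]
  | cons f L ih =>
    simp only [List.foldr_cons, ncs_mul_nil]
    rw [h f (by simp), ih (fun g hg => h g (by simp [hg]))]
    ring

lemma foldr_eval_single (k : ℕ) (L : List NCS) (h : ∀ f ∈ L, f [] = 1) :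
    (L.foldr NCS.mul NCS.one) [k] = (L.map (fun f => f [k])).sum := by
  induction L with
  | nil => simp [NCS.one]
  | cons f L ih =>
    simp only [List.foldr_cons, ncs_mul_single, List.map_cons, List.sum_cons]
    rw [h f (by simp), ih (fun g hg => h g (by simp [hg])),
      foldr_eval_nil L (fun g hg => h g (by simp [hg]))]
    ring

lemma onePlus_nil (j : ℕ) : NCS.onePlus j [] = 1 := by simp [NCS.onePlus]
lemma invSer_nil (j : ℕ) : NCS.invSer j [] = 1 := by simp [NCS.invSer]
lemma onePlus_single (j k : ℕ) : NCS.onePlus j [k] = if j = k then 1 else 0 := by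
  simp only [NCS.onePlus, List.cons.injEq, and_true]
  by_cases h : j = k <;> simp [h, eq_comm]
lemma invSer_single (j k : ℕ) : NCS.invSer j [k] = if j = k then -1 else 0 := by
  simp only [NCS.invSer, List.length_cons, List.length_nil, List.replicate,
    List.cons.injEq, and_true]
  by_cases h : j = k <;> simp [h, eq_comm]

lemma phiEta_single (P : NanophraseV) (k : ℕ) (m : List (ℕ × Bool)) :
    P.phiEta m [k] = (m.map (val P k)).sum := by
  unfold NanophraseV.phiEta
  rw [foldr_eval_single]
  · rw [List.map_map]
    congr 1
    refine List.map_congr_left fun e _ => ?_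
    simp only [Function.comp]
    cases hb : e.2 <;>
      simp [hb, onePlus_single, invSer_single, val, eq_comm]
  · intro f hf
    obtain ⟨e, _, rfl⟩ := List.mem_map.1 hf
    cases hb : e.2 <;> simp [hb, onePlus_nil, invSer_nil]

lemma val_neg (P : NanophraseV) (k : ℕ) (e : ℕ × Bool) :
    val P k (e.1, !e.2) = - val P k e := by
  cases hb : e.2 <;> by_cases h : P.eta e.1 = k <;> simp [val, h, hb]

lemma sum_map_neg (f : ℕ × Bool → ℤ) (l : List (ℕ × Bool)) :
    (l.map fun e => -f e).sum = -(l.map f).sum := by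
  induction l with
  | nil => simp
  | cons a l ih =>
    simp only [List.map_cons, List.sum_cons, ih]
    ring

lemma sum_wInv (P : NanophraseV) (k : ℕ) (w : List (ℕ × Bool)) :
    ((NanophraseV.wInv w).map (val P k)).sum = -((w.map (val P k)).sum) := by
  unfold NanophraseV.wInv
  rw [List.map_map]
  have h : (val P k) ∘ (fun e : ℕ × Bool => (e.1, !e.2)) = fun e => - val P k e := by
    funext e; exact val_neg P k e
  rw [h]
  rw [show (List.map (fun e => -val P k e) w.reverse) =
      (w.reverse.map fun e => -(val P k) e) from rfl, sum_map_neg,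
    List.map_reverse, List.sum_reverse]

lemma sum_expand (P : NanophraseV) (k : ℕ) (w : List (ℕ × Bool)) :
    ((w.flatMap fun e =>
        NanophraseV.wInv (P.xword e.1) ++ e :: P.xword e.1).map (val P k)).sum =
      (w.map (val P k)).sum := by
  induction w with
  | nil => simp
  | cons e w ih =>
    rw [List.flatMap_cons, List.map_append, List.sum_append, ih]
    simp only [List.map_append, List.sum_append, List.map_cons, List.sum_cons,
      sum_wInv]
    ring

lemma sum_rho3 (P : NanophraseV) (k : ℕ) (w : List (ℕ × Bool)) :
    ((P.rho 3 w).map (val P k)).sum = (w.map (val P k)).sum := by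
  have h3 : P.rho 3 w = w.flatMap fun e =>
      NanophraseV.wInv (P.xword e.1) ++ e :: P.xword e.1 := rfl
  rw [h3, sum_expand]

lemma mu_eq_sum (P : NanophraseV) (k i : ℕ) :
    P.mu [k] i = ((P.signedComp i).map (val P k)).sum := by
  show P.phiEta (P.rho 3 (P.signedComp i)) [k] = _
  rw [phiEta_single, sum_rho3]

/-! ### Computations for the torus link -/

lemma flatMap_congr_range {β : Type*} (n : ℕ) (f g : ℕ → List β)
    (h : ∀ j < n, f j = g j) :
    (List.range n).flatMap f = (List.range n).flatMap g := by
  induction n with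
  | zero => simp
  | succ n ih =>
    rw [List.range_succ, List.flatMap_append, List.flatMap_append,
      ih (fun j hj => h j (by omega)), List.flatMap_cons, List.flatMap_cons,
      h n (by omega)]
    simp

lemma torus_word_len (n m : ℕ) :
    ((List.range m).flatMap fun j => [j + 1, n + j + 1]).length = 2 * m := by
  induction m with
  | zero => simp
  | succ m ih =>
    rw [List.range_succ, List.flatMap_append, List.length_append, ih]
    simp
    omega

lemma torus_word_enum (n m : ℕ) :
    ((List.range m).flatMap fun j => [j + 1, n + j + 1]).zipIdx.map Prod.swap =
      (List.range m).flatMap fun j => [(2 * j, j + 1), (2 * j + 1, n + j + 1)] := by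
  induction m with
  | zero => simp
  | succ m ih =>
    rw [List.range_succ, List.flatMap_append, List.flatMap_append,
      List.zipIdx_append, List.map_append, ih, torus_word_len]
    simp [List.zipIdx]

lemma torus_filter_A (n m i c : ℕ) (hi : i < n) :
    (((List.range m).flatMap fun j => [(2 * j, j + 1), (2 * j + 1, n + j + 1)]).filterMap
      fun jb => if jb.2 = i + 1 then some (c, jb.1) else none) =
      if i < m then [(c, 2 * i)] else [] := by
  induction m with
  | zero => simp
  | succ m ih =>
    rw [List.range_succ, List.flatMap_append, List.filterMap_append, ih]
    simp only [List.flatMap_cons, List.flatMap_nil, List.append_nil]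
    have h1 : ¬ (n + m + 1 = i + 1) := by omega
    by_cases hm : m = i
    · subst hm
      have h0 : ¬ (m < m) := by omega
      simp [h0, h1]
      omega
    · have h2 : ¬ (m + 1 = i + 1) := by omega
      by_cases him : i < m
      · have h0 : i < m + 1 := by omega
        simp [him, h0, h1, h2]
        omega
      · have h0 : ¬ (i < m + 1) := by omega
        simp [him, h0, h1, h2]
        omega

lemma torus_filter_B (n m i c : ℕ) (hm : m ≤ n) :
    (((List.range m).flatMap fun j => [(2 * j, j + 1), (2 * j + 1, n + j + 1)]).filterMap
      fun jb => if jb.2 = n + i + 1 then some (c, jb.1) else none) =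
      if i < m then [(c, 2 * i + 1)] else [] := by
  induction m with
  | zero => simp
  | succ m ihm =>
    rw [List.range_succ, List.flatMap_append, List.filterMap_append,
      ihm (by omega)]
    simp only [List.flatMap_cons, List.flatMap_nil, List.append_nil]
    have h1 : ¬ (m + 1 = n + i + 1) := by omega
    by_cases hmi : m = i
    · subst hmi
      have h0 : ¬ (m < m) := by omega
      simp [h0, h1, show n ≠ 0 by omega]
    · have h2 : ¬ (n + m + 1 = n + i + 1) := by omega
      by_cases him : i < m
      · have h0 : i < m + 1 := by omega
        simp [him, h0, h1, h2]
        omega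
      · have h0 : ¬ (i < m + 1) := by omega
        simp [him, h0, h1, h2]
        omega

lemma torus_occs_eq (n a : ℕ) :
    (torusLink n).occs a =
      (((List.range n).flatMap fun j => [j + 1, n + j + 1]).zipIdx.map Prod.swap |>.filterMap
        fun jb => if jb.2 = a then some (1, jb.1) else none) ++
      (((List.range n).flatMap fun j => [j + 1, n + j + 1]).zipIdx.map Prod.swap |>.filterMap
        fun jb => if jb.2 = a then some (2, jb.1) else none) := by
  unfold NanophraseV.occs
  have hc : (torusLink n).comps.zipIdx.map Prod.swap =
      [(0, (List.range n).flatMap fun j => [j + 1, n + j + 1]),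
       (1, (List.range n).flatMap fun j => [j + 1, n + j + 1])] := rfl
  rw [hc]
  simp only [List.flatMap_cons, List.flatMap_nil, List.append_nil]

lemma torus_occs_A (n i : ℕ) (hi : i < n) :
    (torusLink n).occs (i + 1) = [(1, 2 * i), (2, 2 * i)] := by
  rw [torus_occs_eq, torus_word_enum, torus_filter_A n n i 1 hi,
    torus_filter_A n n i 2 hi]
  simp [hi]

lemma torus_occs_B (n i : ℕ) (hi : i < n) :
    (torusLink n).occs (n + i + 1) = [(1, 2 * i + 1), (2, 2 * i + 1)] := by
  rw [torus_occs_eq, torus_word_enum, torus_filter_B n n i 1 le_rfl,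
    torus_filter_B n n i 2 le_rfl]
  simp [hi]

lemma torus_proj_A (n i : ℕ) (hi : i < n) :
    (torusLink n).proj (i + 1) = AlphaV.bp := by
  show (if i + 1 ≤ n then AlphaV.bp else AlphaV.ap) = AlphaV.bp
  have h : i + 1 ≤ n := by omega
  simp [h]

lemma torus_proj_B (n i : ℕ) :
    (torusLink n).proj (n + i + 1) = AlphaV.ap := by
  show (if n + i + 1 ≤ n then AlphaV.bp else AlphaV.ap) = AlphaV.ap
  have h : ¬ (n + i + 1 ≤ n) := by omega
  simp [h]

lemma torus_eta_A (n i : ℕ) (hi : i < n) : (torusLink n).eta (i + 1) = 2 := by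
  unfold NanophraseV.eta NanophraseV.zeroOcc NanophraseV.sndOcc NanophraseV.fstOcc
  rw [torus_occs_A n i hi, torus_proj_A n i hi]
  simp

lemma torus_eta_B (n i : ℕ) (hi : i < n) : (torusLink n).eta (n + i + 1) = 1 := by
  unfold NanophraseV.eta NanophraseV.zeroOcc NanophraseV.sndOcc NanophraseV.fstOcc
  rw [torus_occs_B n i hi, torus_proj_B n i]
  simp

lemma torus_sign_A1 (n i : ℕ) (hi : i < n) :
    (torusLink n).entrySign 1 (2 * i) (i + 1) = some true := by
  unfold NanophraseV.entrySign NanophraseV.fstOcc NanophraseV.sndOcc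
  rw [torus_occs_A n i hi, torus_proj_A n i hi]
  simp

lemma torus_sign_A2 (n i : ℕ) (hi : i < n) :
    (torusLink n).entrySign 2 (2 * i) (i + 1) = none := by
  unfold NanophraseV.entrySign NanophraseV.fstOcc NanophraseV.sndOcc
  rw [torus_occs_A n i hi, torus_proj_A n i hi]
  simp

lemma torus_sign_B1 (n i : ℕ) (hi : i < n) :
    (torusLink n).entrySign 1 (2 * i + 1) (n + i + 1) = none := by
  unfold NanophraseV.entrySign NanophraseV.fstOcc NanophraseV.sndOcc
  rw [torus_occs_B n i hi, torus_proj_B n i]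
  simp

lemma torus_sign_B2 (n i : ℕ) (hi : i < n) :
    (torusLink n).entrySign 2 (2 * i + 1) (n + i + 1) = some true := by
  unfold NanophraseV.entrySign NanophraseV.fstOcc NanophraseV.sndOcc
  rw [torus_occs_B n i hi, torus_proj_B n i]
  simp

lemma torus_signedComp_1 (n : ℕ) :
    (torusLink n).signedComp 1 = (List.range n).flatMap fun j => [(j + 1, true)] := by
  unfold NanophraseV.signedComp NanophraseV.signedCompPos
  have hc : (torusLink n).comps.getD (1 - 1) [] =
      (List.range n).flatMap fun j => [j + 1, n + j + 1] := rfl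
  rw [hc, torus_word_enum, List.filterMap_flatMap, List.map_flatMap]
  refine flatMap_congr_range n _ _ fun j hj => ?_
  rw [List.filterMap_cons, List.filterMap_cons, List.filterMap_nil]
  simp only [torus_sign_A1 n j hj, torus_sign_B1 n j hj, Option.map_some,
    Option.map_none]
  rfl

lemma torus_signedComp_2 (n : ℕ) :
    (torusLink n).signedComp 2 = (List.range n).flatMap fun j => [(n + j + 1, true)] := by
  unfold NanophraseV.signedComp NanophraseV.signedCompPos
  have hc : (torusLink n).comps.getD (2 - 1) [] =
      (List.range n).flatMap fun j => [j + 1, n + j + 1] := rfl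
  rw [hc, torus_word_enum, List.filterMap_flatMap, List.map_flatMap]
  refine flatMap_congr_range n _ _ fun j hj => ?_
  rw [List.filterMap_cons, List.filterMap_cons, List.filterMap_nil]
  simp only [torus_sign_A2 n j hj, torus_sign_B2 n j hj, Option.map_some,
    Option.map_none]
  rfl

lemma sum_flatMap_one (n : ℕ) :
    (((List.range n).flatMap fun _ => [(1 : ℤ)])).sum = n := by
  induction n with
  | zero => simp
  | succ n ih =>
    rw [List.range_succ, List.flatMap_append, List.sum_append, ih]
    push_cast
    simp

end Aux

/-- for the `(2n, 2)` torus link nanophrase,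
`μ(p;2,1) = n` and `μ(p;1,2) = n`. -/
theorem torusLink_mu (n : ℕ) :
    (torusLink n).mu [2] 1 = n ∧ (torusLink n).mu [1] 2 = n := by
  constructor
  · rw [mu_eq_sum, torus_signedComp_1, List.map_flatMap,
      flatMap_congr_range n _ (fun _ => [(1 : ℤ)]) (fun j hj => by
        simp [val, torus_eta_A n j hj]),
      sum_flatMap_one]
  · rw [mu_eq_sum, torus_signedComp_2, List.map_flatMap,
      flatMap_congr_range n _ (fun _ => [(1 : ℤ)]) (fun j hj => by
        simp [val, torus_eta_B n j hj]),
      sum_flatMap_one]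
end

section
/- For the 2-component nanophrase p = A₁A₂⋯Aₙ | A₁A₂⋯Aₙ with |A_j| = b₊ for all j, one has μ(p;2,1) = n while μ(p;1,2) = 0; in particular μ(2,1) ≠ μ(1,2) for n ≥ 1, so the invariant is not symmetric in its arguments for virtual links. -/
/-- The 2-component nanophrase `p = A₁A₂⋯Aₙ | A₁A₂⋯Aₙ` with `|A_j| = b₊`
(letters `A_j` labelled `j`, `1 ≤ j ≤ n`), corresponding to a virtual
link. -/
def virtLink (n : ℕ) : NanophraseV :=
  ⟨[(List.range n).map (· + 1), (List.range n).map (· + 1)],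
   fun _ => AlphaV.bp⟩

namespace VirtAux

open NanophraseV

lemma virt_enum (n : ℕ) :
    ((List.range n).map (· + 1)).zipIdx.map Prod.swap = (List.range n).map (fun j => (j, j + 1)) := by
  apply List.ext_getElem <;> simp

lemma virt_filt (n a i : ℕ) :
    ((((List.range n).map (· + 1)).zipIdx.map Prod.swap).filterMap
      (fun jb => if jb.2 = a then some (i + 1, jb.1) else none)) =
    if 1 ≤ a ∧ a ≤ n then [(i + 1, a - 1)] else [] := by
  rw [virt_enum, List.filterMap_map]
  induction n with
  | zero =>
    rw [if_neg (by omega)]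
    simp
  | succ n ih =>
    rw [List.range_succ, List.filterMap_append, ih]
    by_cases h : a = n + 1
    · rw [if_neg (by omega), if_pos (by omega)]
      simp [Function.comp, h]
    · by_cases h2 : 1 ≤ a ∧ a ≤ n
      · rw [if_pos h2, if_pos (by omega)]
        rw [List.filterMap_cons]
        simp [show ¬ (n + 1 = a) by omega]
      · rw [if_neg h2, if_neg (by omega)]
        rw [List.filterMap_cons]
        simp [show ¬ (n + 1 = a) by omega]

lemma virt_occs (n a : ℕ) :
    (virtLink n).occs a =
      if 1 ≤ a ∧ a ≤ n then [(1, a - 1), (2, a - 1)] else [] := by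
  show (((List.zipIdx [((List.range n).map (· + 1)), ((List.range n).map (· + 1))]).map Prod.swap).flatMap
      fun iw => (iw.2.zipIdx.map Prod.swap).filterMap fun jb => if jb.2 = a then some (iw.1 + 1, jb.1) else none) = _
  rw [show (List.zipIdx [((List.range n).map (· + 1)), ((List.range n).map (· + 1))]).map Prod.swap
      = [(0, (List.range n).map (· + 1)), (1, (List.range n).map (· + 1))] from rfl]
  rw [List.flatMap_cons, List.flatMap_cons, List.flatMap_nil]
  simp only []
  rw [virt_filt n a 0, virt_filt n a 1]
  split_ifs <;> simp

lemma virt_fst (n a : ℕ) (h : 1 ≤ a ∧ a ≤ n) : (virtLink n).fstOcc a = (1, a - 1) := by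
  unfold NanophraseV.fstOcc
  rw [virt_occs, if_pos h]
  rfl

lemma virt_snd (n a : ℕ) (h : 1 ≤ a ∧ a ≤ n) : (virtLink n).sndOcc a = (2, a - 1) := by
  unfold NanophraseV.sndOcc
  rw [virt_occs, if_pos h]
  rfl

lemma virt_proj (n a : ℕ) : (virtLink n).proj a = AlphaV.bp := rfl

lemma virt_entry1 (n a j : ℕ) (h : 1 ≤ a ∧ a ≤ n) :
    (virtLink n).entrySign 1 j a = if j = a - 1 then some true else none := by
  unfold NanophraseV.entrySign
  rw [virt_fst n a h, virt_snd n a h, virt_proj]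
  by_cases hj : j = a - 1
  · simp [hj]
  · rw [if_neg (by simp), if_neg (by simp [Prod.ext_iff]; omega)]
    simp [hj]

lemma virt_entry2 (n a j : ℕ) (h : 1 ≤ a ∧ a ≤ n) :
    (virtLink n).entrySign 2 j a = none := by
  unfold NanophraseV.entrySign
  rw [virt_fst n a h, virt_snd n a h, virt_proj]
  rw [if_neg (by simp), if_neg (by simp [Prod.ext_iff])]
  simp

lemma virt_scp1 (n : ℕ) :
    (virtLink n).signedCompPos 1 = (List.range n).map (fun j => (j, j + 1, true)) := by
  unfold NanophraseV.signedCompPos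
  rw [show (virtLink n).comps.getD (1 - 1) [] = (List.range n).map (· + 1) from rfl]
  rw [virt_enum, List.filterMap_map]
  rw [List.filterMap_congr (g := fun j => some (j, j + 1, true))]
  · exact congrFun (List.filterMap_eq_map (f := fun j => ((j, j + 1, true) : ℕ × ℕ × Bool))) (List.range n)
  · intro j hj
    simp only [Function.comp]
    rw [virt_entry1 n (j + 1) j (by simp at hj; omega)]
    simp

lemma virt_scp2 (n : ℕ) : (virtLink n).signedCompPos 2 = [] := by
  unfold NanophraseV.signedCompPos
  rw [show (virtLink n).comps.getD (2 - 1) [] = (List.range n).map (· + 1) from rfl]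
  rw [virt_enum, List.filterMap_map]
  rw [List.filterMap_congr (g := fun _ => none)]
  · simp
  · intro j hj
    simp only [Function.comp]
    rw [virt_entry2 n (j + 1) j (by simp at hj; omega)]
    rfl

lemma virt_sc1 (n : ℕ) :
    (virtLink n).signedComp 1 = (List.range n).map (fun j => (j + 1, true)) := by
  unfold NanophraseV.signedComp
  rw [virt_scp1, List.map_map]
  exact List.map_congr_left fun _ _ => rfl

lemma virt_sc2 (n : ℕ) : (virtLink n).signedComp 2 = [] := by
  unfold NanophraseV.signedComp
  rw [virt_scp2]
  rfl

lemma virt_zero (n a : ℕ) (h : 1 ≤ a ∧ a ≤ n) :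
    (virtLink n).zeroOcc a = (2, a - 1) := by
  unfold NanophraseV.zeroOcc
  rw [virt_proj, if_pos (Or.inl rfl), virt_snd n a h]

lemma virt_eta (n a : ℕ) (h : 1 ≤ a ∧ a ≤ n) : (virtLink n).eta a = 2 := by
  unfold NanophraseV.eta
  rw [virt_zero n a h]

lemma virt_xword (n a : ℕ) (h : 1 ≤ a ∧ a ≤ n) : (virtLink n).xword a = [] := by
  unfold NanophraseV.xword
  rw [virt_zero n a h]
  simp only []
  rw [virt_scp2]
  rfl

lemma virt_rho3_1 (n : ℕ) :
    (virtLink n).rho 3 ((virtLink n).signedComp 1) = (virtLink n).signedComp 1 := by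
  rw [virt_sc1]
  show (((List.range n).map (fun j => (j + 1, true))).flatMap fun e =>
      NanophraseV.wInv ((virtLink n).rho 2 ((virtLink n).xword e.1)) ++
        e :: (virtLink n).rho 2 ((virtLink n).xword e.1)) = _
  rw [List.flatMap_congr (g := fun e => [e])]
  · simp
  · intro e he
    simp only [List.mem_map, List.mem_range] at he
    obtain ⟨j, hj, rfl⟩ := he
    rw [show (virtLink n).xword (j + 1, true).1 = [] from virt_xword n (j + 1) (by omega)]
    rfl

/-- the partial products `(1+κ₂)^m` -/
lemma virt_fold (m : ℕ) :
    ((List.replicate m (NCS.onePlus 2)).foldr NCS.mul NCS.one) [] = 1 ∧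
    ((List.replicate m (NCS.onePlus 2)).foldr NCS.mul NCS.one) [2] = m := by
  induction m with
  | zero => constructor <;> simp [NCS.one]
  | succ m ih =>
    rw [List.replicate_succ, List.foldr_cons]
    constructor
    · show NCS.mul _ _ [] = 1
      simp [NCS.mul, NCS.onePlus, ih.1]
    · show NCS.mul _ _ [2] = (m + 1 : ℕ)
      simp only [NCS.mul, NCS.onePlus]
      rw [show ([2] : List ℕ).length + 1 = 2 from rfl]
      rw [Finset.sum_range_succ, Finset.sum_range_succ, Finset.sum_range_zero]
      simp [ih.1, ih.2]

lemma virt_mu21 (n : ℕ) : (virtLink n).mu [2] 1 = n := by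
  unfold NanophraseV.mu NanophraseV.phiEta
  rw [show ([2] : List ℕ).length + 2 = 3 from rfl, virt_rho3_1, virt_sc1, List.map_map]
  have h1 : ∀ j ∈ List.range n,
      ((fun (e : ℕ × Bool) => if e.2 then NCS.onePlus ((virtLink n).eta e.1)
        else NCS.invSer ((virtLink n).eta e.1)) ∘ fun j => (j + 1, true)) j
        = NCS.onePlus 2 := by
    intro j hj
    simp only [List.mem_range] at hj
    simp only [Function.comp_apply, if_true]
    rw [virt_eta n (j + 1) ⟨by omega, by omega⟩]
  rw [List.map_congr_left h1]
  rw [show (List.map (fun _ => NCS.onePlus 2) (List.range n))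
      = List.replicate n (NCS.onePlus 2) by
    have := List.map_const' (l := List.range n) (b := NCS.onePlus 2)
    rwa [List.length_range] at this]
  exact (virt_fold n).2

lemma virt_mu12 (n : ℕ) : (virtLink n).mu [1] 2 = 0 := by
  unfold NanophraseV.mu NanophraseV.phiEta
  rw [show ([1] : List ℕ).length + 2 = 3 from rfl, virt_sc2]
  rw [show (virtLink n).rho 3 [] = [] from rfl]
  simp [NCS.one]

end VirtAux

/-- for the virtual link nanophrase
`p = A₁⋯Aₙ | A₁⋯Aₙ` with all projections `b₊`, one has `μ(p;2,1) = n`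
and `μ(p;1,2) = 0`; in particular `μ(2,1) ≠ μ(1,2)` for `n ≥ 1`, so the
invariant is not symmetric in its arguments for virtual links. -/
theorem virtLink_mu (n : ℕ) :
    (virtLink n).mu [2] 1 = n ∧ (virtLink n).mu [1] 2 = 0 ∧
    (1 ≤ n → (virtLink n).mu [2] 1 ≠ (virtLink n).mu [1] 2) := by
  refine ⟨VirtAux.virt_mu21 n, VirtAux.virt_mu12 n, fun hn h => ?_⟩
  rw [VirtAux.virt_mu21 n, VirtAux.virt_mu12 n] at h
  exact_mod_cast absurd h (by omega)
end

section
/- Coefficients of the series φ∘η(ρ^q(w_i^ε)) stabilize: for any nanophrase p, any component i, and any monomial κ_{c₁}⋯κ_{c_u} of degree u, the coefficient of κ_{c₁}⋯κ_{c_u} in φ∘η(ρ^q(w_i^ε)) is the same for all q ≥ u + 2. Hence the limit lim_{q→∞} φ∘η(ρ^q(w_i^ε)) is a well-defined element of ℤ⟪κ₁,…,κₙ⟫. -/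
/-! ### Auxiliary lemmas for the stabilization theorem -/

namespace NCSAux

open NCS

lemma mul_nil (f g : NCS) : f.mul g [] = f [] * g [] := by
  simp [NCS.mul]

lemma mul_cons (f g : NCS) (a : ℕ) (w : List ℕ) :
    f.mul g (a :: w) = f [] * g (a :: w) + (NCS.mul (fun v => f (a :: v)) g) w := by
  unfold NCS.mul
  rw [show (a :: w).length = w.length + 1 from rfl, Finset.sum_range_succ']
  simp [add_comm]

lemma zero_mul (g : NCS) (w : List ℕ) : NCS.mul (fun _ => 0) g w = 0 := by
  simp [NCS.mul]

lemma add_mul (x y g : NCS) (w : List ℕ) :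
    NCS.mul (fun v => x v + y v) g w = NCS.mul x g w + NCS.mul y g w := by
  unfold NCS.mul
  rw [← Finset.sum_add_distrib]
  exact Finset.sum_congr rfl fun i _ => by ring

lemma smul_mul (c : ℤ) (x g : NCS) (w : List ℕ) :
    NCS.mul (fun v => c * x v) g w = c * NCS.mul x g w := by
  unfold NCS.mul
  rw [Finset.mul_sum]
  exact Finset.sum_congr rfl fun i _ => by ring

lemma one_mul (g : NCS) : NCS.one.mul g = g := by
  funext w
  cases w with
  | nil => simp [mul_nil, NCS.one]
  | cons a w =>
      rw [mul_cons]
      have h0 : (fun v => NCS.one (a :: v)) = fun _ : List ℕ => (0 : ℤ) := by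
        funext v; simp [NCS.one]
      rw [h0, zero_mul]
      simp [NCS.one]

lemma mul_one (f : NCS) : f.mul NCS.one = f := by
  funext w
  unfold NCS.mul
  rw [Finset.sum_eq_single w.length]
  · simp [NCS.one]
  · intro i hi hne
    have hi' : i < w.length := lt_of_le_of_ne (Nat.lt_succ_iff.mp (Finset.mem_range.mp hi)) hne
    have : w.drop i ≠ [] := by
      simp [List.drop_eq_nil_iff]; omega
    simp [NCS.one, this]
  · intro h; exact absurd (Finset.self_mem_range_succ w.length) h

lemma mul_assoc (f g h : NCS) : (f.mul g).mul h = f.mul (g.mul h) := by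
  have key : ∀ (w : List ℕ) (f g h : NCS), (f.mul g).mul h w = f.mul (g.mul h) w := by
    intro w
    induction w with
    | nil => intro f g h; simp [mul_nil, _root_.mul_assoc]
    | cons a w ih =>
        intro f g h
        rw [mul_cons, mul_cons]
        have h1 : (fun v => (f.mul g) (a :: v))
            = fun v => f [] * g (a :: v) + (NCS.mul (fun u => f (a :: u)) g) v := by
          funext v; rw [mul_cons]
        rw [h1]
        rw [show NCS.mul (fun v => f [] * g (a :: v) + NCS.mul (fun u => f (a :: u)) g v) h w
            = NCS.mul (fun v => f [] * g (a :: v)) h w + NCS.mul (NCS.mul (fun u => f (a :: u)) g) h w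
            from add_mul _ _ _ _]
        have h2 : NCS.mul (fun v => f [] * g (a :: v)) h w
            = f [] * NCS.mul (fun v => g (a :: v)) h w := smul_mul _ _ _ _
        rw [h2, ih (fun u => f (a :: u)) g h]
        have h3 : (g.mul h) (a :: w) = g [] * h (a :: w) + (NCS.mul (fun v => g (a :: v)) h) w :=
          mul_cons _ _ _ _
        rw [h3, mul_nil f g]
        ring
  funext w; exact key w f g h

lemma invSer_cons (k a : ℕ) (w : List ℕ) :
    NCS.invSer k (a :: w) = if a = k then -(NCS.invSer k w) else 0 := by
  unfold NCS.invSer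
  by_cases hak : a = k
  · have hiff : (a :: w = List.replicate (a :: w).length k) ↔ w = List.replicate w.length k := by
      simp [List.replicate_succ, hak]
    by_cases hw : w = List.replicate w.length k
    · rw [if_pos (hiff.mpr hw), if_pos hw, if_pos hak, List.length_cons, pow_succ]
      ring
    · rw [if_neg (fun hc => hw (hiff.mp hc)), if_neg hw, if_pos hak]
      ring
  · have h1 : ¬ (a :: w = List.replicate (a :: w).length k) := by
      simp [List.replicate_succ, hak]
    rw [if_neg h1, if_neg hak]

lemma invSer_nil (k : ℕ) : NCS.invSer k [] = 1 := by simp [NCS.invSer]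

lemma onePlus_mul_invSer (k : ℕ) : (NCS.onePlus k).mul (NCS.invSer k) = NCS.one := by
  funext w
  cases w with
  | nil => simp [mul_nil, NCS.onePlus, NCS.invSer, NCS.one]
  | cons a w =>
      rw [mul_cons]
      by_cases hak : a = k
      · subst hak
        have hsh : (fun v => NCS.onePlus a (a :: v)) = NCS.one := by
          funext v
          cases v <;> simp [NCS.onePlus, NCS.one]
        rw [hsh, one_mul, invSer_cons]
        simp [NCS.onePlus, NCS.one]
      · have hsh : (fun v => NCS.onePlus k (a :: v)) = fun _ : List ℕ => (0 : ℤ) := by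
          funext v
          simp [NCS.onePlus, List.cons_eq_cons, hak]
        rw [hsh, zero_mul, invSer_cons]
        simp [NCS.onePlus, NCS.one, hak]

lemma invSer_mul_onePlus (k : ℕ) : (NCS.invSer k).mul (NCS.onePlus k) = NCS.one := by
  funext w
  induction w with
  | nil => simp [mul_nil, NCS.onePlus, NCS.invSer, NCS.one]
  | cons a w ih =>
      rw [mul_cons]
      by_cases hak : a = k
      · subst hak
        have hsh : (fun v => NCS.invSer a (a :: v)) = fun v => (-1) * NCS.invSer a v := by
          funext v; rw [invSer_cons]; simp
        rw [hsh, smul_mul, ih, invSer_nil]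
        cases w <;> simp [NCS.onePlus, NCS.one]
      · have hsh : (fun v => NCS.invSer k (a :: v)) = fun _ : List ℕ => (0 : ℤ) := by
          funext v; rw [invSer_cons]; simp [hak]
        rw [hsh, zero_mul, invSer_nil]
        simp [NCS.onePlus, NCS.one, List.cons_eq_cons, hak]

end NCSAux

namespace NanophraseV

open NCSAux

/-- The series assigned to a single signed letter. -/
def letterSer (P : NanophraseV) (e : ℕ × Bool) : NCS :=
  if e.2 then NCS.onePlus (P.eta e.1) else NCS.invSer (P.eta e.1)

lemma letterSer_nil (P : NanophraseV) (e : ℕ × Bool) : P.letterSer e [] = 1 := by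
  unfold letterSer
  by_cases h : e.2 <;> simp [h, NCS.onePlus, NCS.invSer]

lemma phiEta_nil (P : NanophraseV) : P.phiEta [] = NCS.one := rfl

lemma phiEta_cons (P : NanophraseV) (e : ℕ × Bool) (m : List (ℕ × Bool)) :
    P.phiEta (e :: m) = (P.letterSer e).mul (P.phiEta m) := rfl

lemma phiEta_append (P : NanophraseV) (m₁ m₂ : List (ℕ × Bool)) :
    P.phiEta (m₁ ++ m₂) = (P.phiEta m₁).mul (P.phiEta m₂) := by
  induction m₁ with
  | nil => rw [List.nil_append, phiEta_nil, one_mul]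
  | cons e m₁ ih =>
      rw [List.cons_append, phiEta_cons, ih, phiEta_cons, mul_assoc]

lemma phiEta_coeff_nil (P : NanophraseV) (m : List (ℕ × Bool)) :
    P.phiEta m [] = 1 := by
  induction m with
  | nil => rfl
  | cons e m ih =>
      rw [phiEta_cons, mul_nil, ih, letterSer_nil]
      ring

/-- Flipping a signed letter. -/
def flipL (e : ℕ × Bool) : ℕ × Bool := (e.1, !e.2)

lemma wInv_nil : wInv [] = [] := rfl

lemma wInv_cons (e : ℕ × Bool) (v : List (ℕ × Bool)) :
    wInv (e :: v) = wInv v ++ [flipL e] := by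
  simp [wInv, flipL]

lemma letterSer_flip_mul (P : NanophraseV) (e : ℕ × Bool) :
    (P.letterSer (flipL e)).mul (P.letterSer e) = NCS.one := by
  unfold letterSer flipL
  by_cases h : e.2 <;> simp [h, invSer_mul_onePlus, onePlus_mul_invSer]

lemma phiEta_wInv_mul (P : NanophraseV) (v : List (ℕ × Bool)) :
    (P.phiEta (wInv v)).mul (P.phiEta v) = NCS.one := by
  induction v with
  | nil => rw [wInv_nil, phiEta_nil, one_mul]
  | cons e v ih =>
      rw [wInv_cons, phiEta_append, phiEta_cons, phiEta_cons, phiEta_nil, mul_one,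
        mul_assoc, ← mul_assoc (P.letterSer (flipL e)), letterSer_flip_mul, one_mul, ih]

lemma wInv_append (u v : List (ℕ × Bool)) : wInv (u ++ v) = wInv v ++ wInv u := by
  simp [wInv]

lemma wInv_wInv (v : List (ℕ × Bool)) : wInv (wInv v) = v := by
  simp [wInv, List.map_reverse, List.map_map, Function.comp_def, Bool.not_not]

lemma rho3_append (P : NanophraseV) (q : ℕ) (u v : List (ℕ × Bool)) :
    P.rho (q + 3) (u ++ v) = P.rho (q + 3) u ++ P.rho (q + 3) v := by
  show (u ++ v).flatMap _ = _
  rw [List.flatMap_append]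
  rfl

lemma rho3_cons (P : NanophraseV) (q : ℕ) (e : ℕ × Bool) (w : List (ℕ × Bool)) :
    P.rho (q + 3) (e :: w)
      = (wInv (P.rho (q + 2) (P.xword e.1)) ++ e :: P.rho (q + 2) (P.xword e.1))
        ++ P.rho (q + 3) w := by
  show (e :: w).flatMap _ = _
  rw [List.flatMap_cons]
  rfl

lemma rho3_singleton (P : NanophraseV) (q : ℕ) (e : ℕ × Bool) :
    P.rho (q + 3) [e]
      = wInv (P.rho (q + 2) (P.xword e.1)) ++ e :: P.rho (q + 2) (P.xword e.1) := by
  rw [rho3_cons]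
  show _ ++ ([] : List (ℕ × Bool)).flatMap _ = _
  simp

lemma wInv_rho (P : NanophraseV) (q : ℕ) (w : List (ℕ × Bool)) :
    wInv (P.rho q w) = P.rho q (wInv w) := by
  match q with
  | 0 => rfl
  | 1 => rfl
  | 2 => rfl
  | q + 3 =>
      induction w with
      | nil => rfl
      | cons e w ih =>
          rw [rho3_cons, wInv_append, ih, wInv_append, wInv_cons, wInv_wInv,
            List.append_assoc, wInv_cons, rho3_append, rho3_singleton]
          have hx : P.xword (flipL e).1 = P.xword e.1 := rfl
          rw [hx]
          rfl

/-- Two series agree on all monomials of degree at most `d`. -/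
def Agree (d : ℕ) (f g : NCS) : Prop := ∀ w : List ℕ, w.length ≤ d → f w = g w

lemma Agree.mul {d : ℕ} {f f' g g' : NCS} (hf : Agree d f f') (hg : Agree d g g') :
    Agree d (f.mul g) (f'.mul g') := by
  intro w hw
  unfold NCS.mul
  refine Finset.sum_congr rfl fun i _ => ?_
  rw [hf _ (by rw [List.length_take]; omega),
    hg _ (by rw [List.length_drop]; omega)]

/-- The key degree-gain lemma: conjugating a letter series by mutually
inverse pairs that agree up to degree `d` yields agreement up to `d + 1`. -/
lemma gain {d : ℕ} {f f' g g' h : NCS} (hh : h [] = 1)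
    (hfg : f.mul g = f'.mul g')
    (hf : Agree d f f') (hg : Agree d g g') :
    Agree (d + 1) ((f.mul h).mul g) ((f'.mul h).mul g') := by
  intro w hw
  have expand : ∀ (f g : NCS), (f.mul h).mul g w
      = (∑ j ∈ Finset.range (w.length + 1), ∑ i ∈ Finset.range j,
          f (w.take i) * h ((w.take j).drop i) * g (w.drop j)) + f.mul g w := by
    intro f g
    unfold NCS.mul
    rw [← Finset.sum_add_distrib]
    refine Finset.sum_congr rfl fun j hj => ?_
    have hjle : j ≤ w.length := Nat.lt_succ_iff.mp (Finset.mem_range.mp hj)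
    have hlen : (w.take j).length = j := by
      rw [List.length_take]; omega
    rw [hlen, Finset.sum_range_succ, _root_.add_mul, Finset.sum_mul]
    congr 1
    · refine Finset.sum_congr rfl fun i hi => ?_
      have hij : i < j := Finset.mem_range.mp hi
      rw [List.take_take, Nat.min_eq_left (le_of_lt hij)]
    · rw [List.take_take, Nat.min_self, List.drop_eq_nil_of_le (le_of_eq hlen),
        hh]
      ring
  rw [expand f g, expand f' g', hfg]
  congr 1
  refine Finset.sum_congr rfl fun j hj => Finset.sum_congr rfl fun i hi => ?_
  have hj' : j ≤ w.length := Nat.lt_succ_iff.mp (Finset.mem_range.mp hj)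
  have hij : i < j := Finset.mem_range.mp hi
  rw [hf _ (by rw [List.length_take]; omega),
    hg _ (by rw [List.length_drop]; omega)]

/-- The series of a conjugation block agrees one degree further. -/
lemma block_agree (P : NanophraseV) {d : ℕ} {v v' : List (ℕ × Bool)} (e : ℕ × Bool)
    (hv : Agree d (P.phiEta v) (P.phiEta v'))
    (hvi : Agree d (P.phiEta (wInv v)) (P.phiEta (wInv v'))) :
    Agree (d + 1) (P.phiEta (wInv v ++ e :: v)) (P.phiEta (wInv v' ++ e :: v')) := by
  have h1 : ∀ u : List (ℕ × Bool), P.phiEta (wInv u ++ e :: u)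
      = ((P.phiEta (wInv u)).mul (P.letterSer e)).mul (P.phiEta u) := by
    intro u
    rw [phiEta_append, phiEta_cons, ← NCSAux.mul_assoc]
  rw [h1, h1]
  exact gain (letterSer_nil P e)
    (by rw [phiEta_wInv_mul, phiEta_wInv_mul]) hvi hv

/-- Key stabilization step: passing from `ρ^{q+2}` to `ρ^{q+3}` does not
change coefficients in degrees `≤ q`. -/
lemma flatMap_agree (P : NanophraseV) {d : ℕ} {B B' : (ℕ × Bool) → List (ℕ × Bool)}
    (hB : ∀ e, Agree d (P.phiEta (B e)) (P.phiEta (B' e))) :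
    ∀ w : List (ℕ × Bool),
      Agree d (P.phiEta (w.flatMap B)) (P.phiEta (w.flatMap B')) := by
  intro w
  induction w with
  | nil => intro cs _; rfl
  | cons e w ih =>
      rw [List.flatMap_cons, List.flatMap_cons, phiEta_append, phiEta_append]
      exact Agree.mul (hB e) ih

lemma rho_step_agree (P : NanophraseV) :
    ∀ q : ℕ, ∀ w : List (ℕ × Bool),
      Agree q (P.phiEta (P.rho (q + 3) w)) (P.phiEta (P.rho (q + 2) w)) := by
  intro q
  induction q with
  | zero =>
      intro w cs hcs
      have : cs = [] := List.length_eq_zero_iff.mp (Nat.le_zero.mp hcs)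
      subst this
      rw [phiEta_coeff_nil, phiEta_coeff_nil]
  | succ q ih =>
      intro w
      have h23 : q + 1 + 2 = q + 3 := by omega
      rw [show (P.rho (q + 1 + 3) w)
          = w.flatMap (fun e => wInv (P.rho (q + 1 + 2) (P.xword e.1))
              ++ e :: P.rho (q + 1 + 2) (P.xword e.1)) from rfl]
      simp only [h23]
      rw [show (P.rho (q + 3) w)
          = w.flatMap (fun e => wInv (P.rho (q + 2) (P.xword e.1))
              ++ e :: P.rho (q + 2) (P.xword e.1)) from rfl]
      refine flatMap_agree P (fun e => ?_) w
      refine block_agree P e (ih (P.xword e.1)) ?_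
      rw [wInv_rho, wInv_rho]
      exact ih (wInv (P.xword e.1))

lemma rho_stable (P : NanophraseV) (w : List (ℕ × Bool)) (cs : List ℕ) :
    ∀ k : ℕ, P.phiEta (P.rho (cs.length + 2 + k) w) cs
      = P.phiEta (P.rho (cs.length + 2) w) cs := by
  intro k
  induction k with
  | zero => rfl
  | succ k ih =>
      have h1 : cs.length + 2 + (k + 1) = (cs.length + k) + 3 := by omega
      have h2 : cs.length + 2 + k = (cs.length + k) + 2 := by omega
      rw [h1, P.rho_step_agree (cs.length + k) w cs (by omega), ← h2, ih]

end NanophraseV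

/-- the coefficients of `φ∘η(ρ^q(w_i^ε))` stabilize: for
any nanophrase `P`, any component `i` and any monomial `κ_{c₁}⋯κ_{c_u}`,
the coefficient of `κ_{c₁}⋯κ_{c_u}` in `φ∘η(ρ^q(w_i^ε))` is the same for
all `q ≥ u + 2`; hence `lim_{q→∞} φ∘η(ρ^q(w_i^ε))` is a well-defined
power series. -/
theorem phiEta_rho_stabilizes (P : NanophraseV) (hP : P.IsGauss)
    (i : ℕ) (cs : List ℕ) (q q' : ℕ)
    (hq : cs.length + 2 ≤ q) (hq' : cs.length + 2 ≤ q') :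
    P.phiEta (P.rho q (P.signedComp i)) cs
      = P.phiEta (P.rho q' (P.signedComp i)) cs := by
  obtain ⟨k, rfl⟩ := Nat.exists_eq_add_of_le hq
  obtain ⟨k', rfl⟩ := Nat.exists_eq_add_of_le hq'
  rw [P.rho_stable _ _ k, P.rho_stable _ _ k']
end

section
/- μ is invariant under H1 moves: if nanophrases p and p' over α_v are related by an H1 move (deletion of a subword AA within one component), then for every sequence c₁,…,c_u,i of integers between 1 and n, μ(p;c₁,…,c_u,i) = μ(p';c₁,…,c_u,i). -/
namespace H1Aux

open NanophraseV

variable {β : Type}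

/-- `enumFrom`–`filterMap` helper. -/
def efm (F : ℕ → ℕ → Option β) (t : ℕ) (w : List ℕ) : List β :=
  ((w.zipIdx t).map Prod.swap).filterMap fun jb => F jb.1 jb.2

theorem efm_nil (F : ℕ → ℕ → Option β) (t : ℕ) : efm F t [] = [] := rfl

theorem efm_cons (F : ℕ → ℕ → Option β) (t b : ℕ) (w : List ℕ) :
    efm F t (b :: w) = (F t b).toList ++ efm F (t + 1) w := by
  simp only [efm, List.zipIdx_cons, List.map_cons, Prod.swap, List.filterMap_cons]
  cases F t b <;> simp

theorem efm_append (F : ℕ → ℕ → Option β) (t : ℕ) (u v : List ℕ) :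
    efm F t (u ++ v) = efm F t u ++ efm F (t + u.length) v := by
  induction u generalizing t with
  | nil => simp [efm_nil]
  | cons b u ih =>
    rw [List.cons_append, efm_cons, efm_cons, ih, List.append_assoc]
    have : t + 1 + u.length = t + (b :: u).length := by simp; omega
    rw [this]

theorem efm_congr {F G : ℕ → ℕ → Option β} (t : ℕ) (w : List ℕ)
    (h : ∀ j b, t ≤ j → j < t + w.length → F j b = G j b) :
    efm F t w = efm G t w := by
  induction w generalizing t with
  | nil => rfl
  | cons b w ih =>
    rw [efm_cons, efm_cons, h t b le_rfl (by simp),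
      ih (t + 1) fun j c hj hj2 => h j c (by omega) (by simp at hj2 ⊢; omega)]

theorem efm_map {F G : ℕ → ℕ → Option β} {f : β → β} (t : ℕ) (w : List ℕ)
    (h : ∀ j b, t ≤ j → F j b = (G (j + 2) b).map f) :
    efm F t w = (efm G (t + 2) w).map f := by
  induction w generalizing t with
  | nil => rfl
  | cons b w ih =>
    rw [efm_cons, efm_cons, List.map_append, h t b le_rfl,
      ih (t + 1) fun j c hj => h j c (by omega)]
    have h2 : t + 1 + 2 = t + 2 + 1 := by omega
    rw [h2]
    congr 1
    cases G (t + 2) b <;> rfl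

theorem efm_mem {F : ℕ → ℕ → Option β} {t : ℕ} {w : List ℕ} {p : β}
    (h : p ∈ efm F t w) :
    ∃ j b, t ≤ j ∧ j < t + w.length ∧ F j b = some p := by
  induction w generalizing t with
  | nil => simp [efm_nil] at h
  | cons b w ih =>
    rw [efm_cons, List.mem_append] at h
    rcases h with h | h
    · refine ⟨t, b, le_rfl, by simp, ?_⟩
      rwa [Option.mem_toList] at h
    · obtain ⟨j, c, hj, hj2, hF⟩ := ih h
      exact ⟨j, c, by omega, by simp at hj2 ⊢; omega, hF⟩

/-- The occurrence function of `occs`. -/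
def occF (a i j b : ℕ) : Option (ℕ × ℕ) := if b = a then some (i + 1, j) else none

/-- `occs` decomposed over the list of components. -/
def ofm (a s : ℕ) (l : List (List ℕ)) : List (ℕ × ℕ) :=
  ((l.zipIdx s).map Prod.swap).flatMap fun iw =>
    (iw.2.zipIdx.map Prod.swap).filterMap fun jb => if jb.2 = a then some (iw.1 + 1, jb.1) else none

theorem occs_eq_ofm (P : NanophraseV) (a : ℕ) : P.occs a = ofm a 0 P.comps := rfl

theorem ofm_nil (a s : ℕ) : ofm a s [] = [] := rfl

theorem ofm_cons (a s : ℕ) (w : List ℕ) (l : List (List ℕ)) :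
    ofm a s (w :: l) = efm (occF a s) 0 w ++ ofm a (s + 1) l := by
  simp only [ofm, efm, occF, List.zipIdx_cons, List.map_cons, List.flatMap_cons]
  rfl

theorem ofm_append (a s : ℕ) (l1 l2 : List (List ℕ)) :
    ofm a s (l1 ++ l2) = ofm a s l1 ++ ofm a (s + l1.length) l2 := by
  induction l1 generalizing s with
  | nil => simp [ofm_nil]
  | cons w l ih =>
    rw [List.cons_append, ofm_cons, ofm_cons, ih, List.append_assoc]
    have : s + 1 + l.length = s + (w :: l).length := by simp; omega
    rw [this]

theorem ofm_mem {a s : ℕ} {l : List (List ℕ)} {p : ℕ × ℕ} (h : p ∈ ofm a s l) :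
    s + 1 ≤ p.1 ∧ p.1 ≤ s + l.length := by
  induction l generalizing s with
  | nil => simp [ofm_nil] at h
  | cons w l ih =>
    rw [ofm_cons, List.mem_append] at h
    rcases h with h | h
    · obtain ⟨j, b, _, _, hF⟩ := efm_mem h
      unfold occF at hF
      split at hF
      · cases hF; simp
      · cases hF
    · have := ih h
      constructor <;> [omega; (simp; omega)]

theorem occF_mem {a i j b : ℕ} {p : ℕ × ℕ} (h : occF a i j b = some p) :
    p = (i + 1, j) := by
  unfold occF at h; split at h <;> [(cases h; rfl); cases h]

end H1Aux
namespace H1Aux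
open NanophraseV

/-- Position shift map on occurrences. -/
def phi (k n : ℕ) (p : ℕ × ℕ) : ℕ × ℕ :=
  if p.1 = k + 1 ∧ n ≤ p.2 then (p.1, p.2 - 2) else p

/-- Valid occurrence positions (avoiding the deleted `AA`). -/
def Valid (k n : ℕ) (p : ℕ × ℕ) : Prop :=
  p.1 ≠ k + 1 ∨ p.2 < n ∨ n + 2 ≤ p.2

theorem phi_fst (k n : ℕ) (p : ℕ × ℕ) : (phi k n p).1 = p.1 := by
  unfold phi; split <;> rfl

theorem phi_zero (k n : ℕ) : phi k n (0, 0) = (0, 0) := by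
  simp [phi]

theorem valid_zero (k n : ℕ) : Valid k n (0, 0) := by
  simp [Valid]

theorem phi_inj {k n : ℕ} {p q : ℕ × ℕ} (hp : Valid k n p) (hq : Valid k n q)
    (h : phi k n p = phi k n q) : p = q := by
  obtain ⟨p1, p2⟩ := p
  obtain ⟨q1, q2⟩ := q
  unfold Valid at hp hq
  simp only at hp hq
  unfold phi at h
  split_ifs at h with h1 h2 h3 <;>
    simp only [Prod.mk.injEq] at h hp hq ⊢ <;>
    simp only [not_and, not_le] at * <;> omega

theorem phi_eq_iff {k n : ℕ} {p q : ℕ × ℕ} (hp : Valid k n p) (hq : Valid k n q) :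
    phi k n p = phi k n q ↔ p = q :=
  ⟨phi_inj hp hq, fun h => by rw [h]⟩

section Move

structure Move (P P' : NanophraseV) (pre post : List (List ℕ)) (x y : List ℕ)
    (A : ℕ) : Prop where
  hc : P.comps = pre ++ (x ++ A :: A :: y) :: post
  hc' : P'.comps = pre ++ (x ++ y) :: post
  hpr : P'.proj = P.proj
  hG : P.IsGauss

variable {P P' : NanophraseV} {pre post : List (List ℕ)} {x y : List ℕ} {A : ℕ}
  (h : Move P P' pre post x y A)

include h

theorem occs_P (a : ℕ) :
    P.occs a = ofm a 0 pre ++ (efm (occF a pre.length) 0 x ++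
      ((occF a pre.length x.length A).toList ++
        ((occF a pre.length (x.length + 1) A).toList ++
          efm (occF a pre.length) (x.length + 2) y))) ++
      ofm a (pre.length + 1) post := by
  rw [occs_eq_ofm, h.hc, ofm_append, ofm_cons, efm_append, efm_cons, efm_cons]
  simp only [Nat.zero_add, Nat.add_zero, List.append_assoc]

theorem occs_P' (a : ℕ) :
    P'.occs a = ofm a 0 pre ++ (efm (occF a pre.length) 0 x ++
      efm (occF a pre.length) x.length y) ++ ofm a (pre.length + 1) post := by
  rw [occs_eq_ofm, h.hc', ofm_append, ofm_cons, efm_append]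
  simp only [Nat.zero_add, List.append_assoc]

theorem occs_A :
    P.occs A = [(pre.length + 1, x.length), (pre.length + 1, x.length + 1)] ∧
    ofm A 0 pre = [] ∧ efm (occF A pre.length) 0 x = [] ∧
    efm (occF A pre.length) (x.length + 2) y = [] ∧
    ofm A (pre.length + 1) post = [] := by
  have hm : A ∈ P.comps.flatten := by
    rw [h.hc]
    refine List.mem_flatten.2 ⟨x ++ A :: A :: y, by simp, by simp⟩
  have hl := h.hG A hm
  rw [occs_P h] at hl
  have h1 : occF A pre.length x.length A = some (pre.length + 1, x.length) := by
    simp [occF]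
  have h2 : occF A pre.length (x.length + 1) A
      = some (pre.length + 1, x.length + 1) := by simp [occF]
  rw [h1, h2] at hl
  simp only [List.length_append, Option.toList_some, List.length_cons,
    List.length_singleton] at hl
  have e1 : ofm A 0 pre = [] := List.length_eq_zero_iff.1 (by omega)
  have e2 : efm (occF A pre.length) 0 x = [] := List.length_eq_zero_iff.1 (by omega)
  have e3 : efm (occF A pre.length) (x.length + 2) y = [] :=
    List.length_eq_zero_iff.1 (by omega)
  have e4 : ofm A (pre.length + 1) post = [] := List.length_eq_zero_iff.1 (by omega)
  refine ⟨?_, e1, e2, e3, e4⟩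
  rw [occs_P h, e1, e2, e3, e4, h1, h2]
  simp

omit h in
theorem occF_shift (a k : ℕ) :
    ∀ j b, occF a k j b = (occF a k (j + 2) b).map (fun p => (p.1, p.2 - 2)) := by
  intro j b
  unfold occF
  split <;> simp

theorem occs_A' : P'.occs A = [] := by
  obtain ⟨-, e1, e2, e3, e4⟩ := occs_A h
  rw [occs_P' h, e1, e2, e4,
    efm_map x.length y (fun j b _ => occF_shift A pre.length j b), e3]
  simp

end Move
end H1Aux
namespace H1Aux
open NanophraseV

theorem map_phi_id {k n : ℕ} {l : List (ℕ × ℕ)}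
    (hl : ∀ p ∈ l, phi k n p = p) : l.map (phi k n) = l :=
  (List.map_congr_left hl).trans l.map_id

section Move2

variable {P P' : NanophraseV} {pre post : List (List ℕ)} {x y : List ℕ} {A : ℕ}
  (h : Move P P' pre post x y A)

include h

theorem occs_map {a : ℕ} (ha : a ≠ A) :
    P'.occs a = (P.occs a).map (phi pre.length x.length) := by
  have hA1 : occF a pre.length x.length A = none := by simp [occF, Ne.symm ha]
  have hA2 : occF a pre.length (x.length + 1) A = none := by simp [occF, Ne.symm ha]
  rw [occs_P' h, occs_P h, hA1, hA2]
  simp only [Option.toList_none, List.nil_append, List.map_append]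
  congr 1
  congr 1
  · apply (map_phi_id ?_).symm
    intro p hp
    have := ofm_mem hp
    unfold phi
    rw [if_neg]
    simp only [not_and]
    omega
  congr 1
  · apply (map_phi_id ?_).symm
    intro p hp
    obtain ⟨j, b, hj, hj2, hF⟩ := efm_mem hp
    have hpj := occF_mem hF
    subst hpj
    simp only [Nat.zero_add] at hj2
    unfold phi
    rw [if_neg]
    simp only [not_and, not_le]
    intro
    omega
  · rw [efm_map x.length y (fun j b _ => occF_shift a pre.length j b)]
    apply List.map_congr_left
    intro p hp
    obtain ⟨j, b, hj, hj2, hF⟩ := efm_mem hp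
    have hpj := occF_mem hF
    unfold phi
    rw [if_pos]
    subst hpj
    simp
    omega
  · apply (map_phi_id ?_).symm
    intro p hp
    have := ofm_mem hp
    unfold phi
    rw [if_neg]
    simp only [not_and]
    omega

theorem occs_valid {a : ℕ} (ha : a ≠ A) {p : ℕ × ℕ} (hp : p ∈ P.occs a) :
    1 ≤ p.1 ∧ Valid pre.length x.length p := by
  have hA1 : occF a pre.length x.length A = none := by simp [occF, Ne.symm ha]
  have hA2 : occF a pre.length (x.length + 1) A = none := by simp [occF, Ne.symm ha]
  rw [occs_P h, hA1, hA2] at hp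
  simp only [Option.toList_none, List.nil_append, List.mem_append] at hp
  unfold Valid
  rcases hp with (hp | hp) | hp
  · have := ofm_mem hp
    constructor
    · omega
    left; omega
  · rcases hp with hp | hp
    · obtain ⟨j, b, hj, hj2, hF⟩ := efm_mem hp
      have := occF_mem hF
      subst this
      simp only [Nat.zero_add] at hj2
      exact ⟨by omega, Or.inr (Or.inl hj2)⟩
    · obtain ⟨j, b, hj, hj2, hF⟩ := efm_mem hp
      have := occF_mem hF
      subst this
      exact ⟨by omega, Or.inr (Or.inr hj)⟩
  · have := ofm_mem hp
    exact ⟨by omega, Or.inl (by omega)⟩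

omit h in
theorem getD_mem_or (l : List (ℕ × ℕ)) (m : ℕ) :
    l.getD m (0, 0) ∈ l ∨ l.getD m (0, 0) = (0, 0) := by
  rw [List.getD_eq_getElem?_getD]
  rcases Nat.lt_or_ge m l.length with hm | hm
  · left
    rw [List.getElem?_eq_getElem hm]
    exact List.getElem_mem hm
  · right
    rw [List.getElem?_eq_none hm]
    rfl

omit h in
theorem getD_map_phi (k n : ℕ) (l : List (ℕ × ℕ)) (m : ℕ) :
    (l.map (phi k n)).getD m (0, 0) = phi k n (l.getD m (0, 0)) := by
  rw [List.getD_eq_getElem?_getD, List.getD_eq_getElem?_getD, List.getElem?_map]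
  cases l[m]?
  · exact (phi_zero k n).symm
  · simp

theorem fstOcc_map {a : ℕ} (ha : a ≠ A) :
    P'.fstOcc a = phi pre.length x.length (P.fstOcc a) := by
  unfold NanophraseV.fstOcc
  rw [occs_map h ha, getD_map_phi]

theorem sndOcc_map {a : ℕ} (ha : a ≠ A) :
    P'.sndOcc a = phi pre.length x.length (P.sndOcc a) := by
  unfold NanophraseV.sndOcc
  rw [occs_map h ha, getD_map_phi]

theorem fstOcc_valid {a : ℕ} (ha : a ≠ A) : Valid pre.length x.length (P.fstOcc a) := by
  rcases getD_mem_or (P.occs a) 0 with hm | hm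
  · exact (occs_valid h ha hm).2
  · rw [NanophraseV.fstOcc, hm]; exact valid_zero _ _
theorem sndOcc_valid {a : ℕ} (ha : a ≠ A) : Valid pre.length x.length (P.sndOcc a) := by
  rcases getD_mem_or (P.occs a) 1 with hm | hm
  · exact (occs_valid h ha hm).2
  · rw [NanophraseV.sndOcc, hm]; exact valid_zero _ _

theorem zeroOcc_map {a : ℕ} (ha : a ≠ A) :
    P'.zeroOcc a = phi pre.length x.length (P.zeroOcc a) := by
  unfold NanophraseV.zeroOcc
  rw [h.hpr]
  split
  · exact sndOcc_map h ha
  · exact fstOcc_map h ha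

theorem eta_eq {a : ℕ} (ha : a ≠ A) : P'.eta a = P.eta a := by
  unfold NanophraseV.eta
  rw [zeroOcc_map h ha, phi_fst]

theorem fstOcc_A : P.fstOcc A = (pre.length + 1, x.length) := by
  unfold NanophraseV.fstOcc
  rw [(occs_A h).1]
  rfl

theorem sndOcc_A : P.sndOcc A = (pre.length + 1, x.length + 1) := by
  unfold NanophraseV.sndOcc
  rw [(occs_A h).1]
  rfl

theorem entrySign_A (i j : ℕ) : P.entrySign i j A = none := by
  unfold NanophraseV.entrySign
  rw [if_pos]
  rw [fstOcc_A h, sndOcc_A h]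

theorem entrySign_A' (i j : ℕ) : P'.entrySign i j A = none := by
  have h0 : P'.occs A = [] := occs_A' h
  unfold NanophraseV.entrySign NanophraseV.fstOcc NanophraseV.sndOcc
  rw [h0]
  rfl

/-- Key correspondence for `entrySign`. -/
theorem entrySign_map {a : ℕ} (ha : a ≠ A) {p : ℕ × ℕ}
    (hp : Valid pre.length x.length p) :
    P'.entrySign (phi pre.length x.length p).1 (phi pre.length x.length p).2 a
      = P.entrySign p.1 p.2 a := by
  unfold NanophraseV.entrySign
  rw [h.hpr, fstOcc_map h ha, sndOcc_map h ha, phi_fst, phi_fst]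
  split
  · rfl
  · simp only [Prod.mk.eta, phi_eq_iff hp (fstOcc_valid h ha)]

end Move2
end H1Aux
namespace H1Aux
open NanophraseV

/-- `signedCompPos` as an `efm`. -/
theorem signedCompPos_eq (Q : NanophraseV) (i : ℕ) :
    Q.signedCompPos i = efm
      (fun j b => (Q.entrySign i j b).map fun s => (j, b, s)) 0
      (Q.comps.getD (i - 1) []) := rfl

theorem getD_mid (pre post : List (List ℕ)) (c : List ℕ) :
    (pre ++ c :: post).getD pre.length [] = c := by
  induction pre with
  | nil => rfl
  | cons p pr ih => simpa using ih

theorem getD_ne {m : ℕ} (pre post : List (List ℕ)) (c c' : List ℕ)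
    (hm : m ≠ pre.length) :
    (pre ++ c :: post).getD m [] = (pre ++ c' :: post).getD m [] := by
  induction pre generalizing m with
  | nil =>
    cases m with
    | zero => exact absurd rfl hm
    | succ m => simp
  | cons p pr ih =>
    cases m with
    | zero => rfl
    | succ m => simpa using ih (by simpa using hm)

theorem SF_some {Q : NanophraseV} {i j b : ℕ} {e : ℕ × ℕ × Bool}
    (hF : (Q.entrySign i j b).map (fun s => (j, b, s)) = some e) :
    e.1 = j ∧ e.2.1 = b ∧ Q.entrySign i j b = some e.2.2 := by
  cases hE : Q.entrySign i j b <;> rw [hE] at hF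
  · cases hF
  · cases hF
    exact ⟨rfl, rfl, rfl⟩

/-- Every element of `signedCompPos` comes from a `some` value of
`entrySign`. -/
theorem signedCompPos_mem {Q : NanophraseV} {i : ℕ} {e : ℕ × ℕ × Bool}
    (he : e ∈ Q.signedCompPos i) :
    Q.entrySign i e.1 e.2.1 = some e.2.2 := by
  rw [signedCompPos_eq] at he
  obtain ⟨j, b, _, _, hF⟩ := efm_mem he
  obtain ⟨h1, h2, h3⟩ := SF_some hF
  rw [h1, h2]
  exact h3

section Move3

variable {P P' : NanophraseV} {pre post : List (List ℕ)} {x y : List ℕ} {A : ℕ}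
  (h : Move P P' pre post x y A)

include h

theorem scp_clean {i : ℕ} {e : ℕ × ℕ × Bool} (he : e ∈ P.signedCompPos i) :
    e.2.1 ≠ A := by
  intro hA
  have := signedCompPos_mem he
  rw [hA, entrySign_A h] at this
  cases this

theorem S1 {i : ℕ} (hi1 : 1 ≤ i) (hik : i ≠ pre.length + 1) :
    P'.signedCompPos i = P.signedCompPos i := by
  rw [signedCompPos_eq, signedCompPos_eq, h.hc, h.hc',
    getD_ne pre post (x ++ y) (x ++ A :: A :: y) (by omega)]
  apply efm_congr
  intro j b _ _
  by_cases hb : b = A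
  · subst hb
    rw [entrySign_A h, entrySign_A' h]
  · have hv : Valid pre.length x.length (i, j) := Or.inl (by simpa using hik)
    have hphi : phi pre.length x.length (i, j) = (i, j) := by
      unfold phi
      rw [if_neg]
      simp only [not_and]
      intro hh
      exact absurd hh hik
    have := entrySign_map h hb hv
    rw [hphi] at this
    simp only at this
    rw [this]

theorem scp_P : P.signedCompPos (pre.length + 1)
    = efm (fun j b => (P.entrySign (pre.length + 1) j b).map fun s => (j, b, s)) 0 x
      ++ efm (fun j b => (P.entrySign (pre.length + 1) j b).map fun s => (j, b, s))
        (x.length + 2) y := by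
  rw [signedCompPos_eq, h.hc, Nat.add_sub_cancel, getD_mid, efm_append, efm_cons,
    efm_cons, entrySign_A h]
  have : x.length + 1 + 1 = x.length + 2 := rfl
  rw [Nat.zero_add]
  have h2 : P.entrySign (pre.length + 1) (x.length + 1) A = none := entrySign_A h _ _
  rw [h2]
  simp

theorem scp_P' : P'.signedCompPos (pre.length + 1)
    = efm (fun j b => (P.entrySign (pre.length + 1) j b).map fun s => (j, b, s)) 0 x
      ++ (efm (fun j b => (P.entrySign (pre.length + 1) j b).map fun s => (j, b, s))
        (x.length + 2) y).map (fun e => (e.1 - 2, e.2)) := by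
  rw [signedCompPos_eq, h.hc', Nat.add_sub_cancel, getD_mid, efm_append, Nat.zero_add]
  congr 1
  · apply efm_congr
    intro j b _ hj
    simp only [Nat.zero_add] at hj
    by_cases hb : b = A
    · subst hb
      rw [entrySign_A h, entrySign_A' h]
    · have hv : Valid pre.length x.length (pre.length + 1, j) :=
        Or.inr (Or.inl hj)
      have hphi : phi pre.length x.length (pre.length + 1, j)
          = (pre.length + 1, j) := by
        unfold phi
        rw [if_neg]
        simp only [not_and, not_le]
        intro
        exact hj
      have := entrySign_map h hb hv
      rw [hphi] at this
      simp only at this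
      rw [this]
  · apply efm_map
    intro j b hj
    by_cases hb : b = A
    · subst hb
      rw [entrySign_A h, entrySign_A' h]
      rfl
    · have hv : Valid pre.length x.length (pre.length + 1, j + 2) :=
        Or.inr (Or.inr (by omega))
      have hphi : phi pre.length x.length (pre.length + 1, j + 2)
          = (pre.length + 1, j) := by
        unfold phi
        rw [if_pos ⟨rfl, by omega⟩]
        simp
      have := entrySign_map h hb hv
      rw [hphi] at this
      simp only at this
      rw [this]
      cases P.entrySign (pre.length + 1) (j + 2) b <;> simp

theorem signedComp_eq {i : ℕ} (hi1 : 1 ≤ i) :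
    P'.signedComp i = P.signedComp i := by
  by_cases hik : i = pre.length + 1
  · subst hik
    unfold NanophraseV.signedComp
    rw [scp_P h, scp_P' h, List.map_append, List.map_append, List.map_map]
    congr 1
  · unfold NanophraseV.signedComp
    rw [S1 h hi1 hik]

end Move3
end H1Aux
namespace H1Aux
open NanophraseV

theorem efm_pos_mem {Q : NanophraseV} {i t : ℕ} {w : List ℕ} {e : ℕ × ℕ × Bool}
    (he : e ∈ efm (fun j b => (Q.entrySign i j b).map fun s => (j, b, s)) t w) :
    t ≤ e.1 ∧ e.1 < t + w.length := by
  obtain ⟨j, b, hj, hj2, hF⟩ := efm_mem he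
  obtain ⟨h1, -, -⟩ := SF_some hF
  omega

section Move4

variable {P P' : NanophraseV} {pre post : List (List ℕ)} {x y : List ℕ} {A : ℕ}
  (h : Move P P' pre post x y A)

include h

omit h in
theorem xcore {n : ℕ} (Ex Ey : List (ℕ × ℕ × Bool)) (hEx : ∀ e ∈ Ex, e.1 < n)
    (hEy : ∀ e ∈ Ey, n + 2 ≤ e.1) {z2 : ℕ} (hz : z2 < n ∨ n + 2 ≤ z2) :
    ((Ex ++ Ey.map (fun e : ℕ × ℕ × Bool => ((e.1 - 2 : ℕ), e.2))).filter
        (fun e : ℕ × ℕ × Bool => decide (e.1 < (if n ≤ z2 then z2 - 2 else z2)))).map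
        (fun e : ℕ × ℕ × Bool => (e.2.1, e.2.2))
      = ((Ex ++ Ey).filter (fun e : ℕ × ℕ × Bool => decide (e.1 < z2))).map
        (fun e : ℕ × ℕ × Bool => (e.2.1, e.2.2)) := by
  rw [List.filter_append, List.filter_append, List.map_append, List.map_append]
  congr 1
  · congr 1
    apply List.filter_congr
    intro e he
    have := hEx e he
    rw [decide_eq_decide]
    split <;> omega
  · rw [List.filter_map]
    have hfc : List.filter
        ((fun e : ℕ × ℕ × Bool => decide (e.1 < if n ≤ z2 then z2 - 2 else z2)) ∘
          (fun e : ℕ × ℕ × Bool => ((e.1 - 2 : ℕ), e.2))) Ey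
        = List.filter (fun e : ℕ × ℕ × Bool => decide (e.1 < z2)) Ey := by
      apply List.filter_congr
      intro e he
      have := hEy e he
      simp only [Function.comp_apply]
      rw [decide_eq_decide]
      split <;> omega
    rw [hfc, List.map_map]
    exact List.map_congr_left fun e _ => rfl

theorem xword_eq {a : ℕ} (ha : a ≠ A) : P'.xword a = P.xword a := by
  have hz := zeroOcc_map h ha
  have hzor : P.zeroOcc a ∈ P.occs a ∨ P.zeroOcc a = (0, 0) := by
    unfold NanophraseV.zeroOcc NanophraseV.fstOcc NanophraseV.sndOcc
    split <;> exact getD_mem_or _ _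
  unfold NanophraseV.xword
  rcases hzor with hm | h0
  swap
  · rw [hz, h0, phi_zero]
    rw [List.filter_eq_nil_iff.2 (by simp), List.filter_eq_nil_iff.2 (by simp)]
  obtain ⟨h1, hv⟩ := occs_valid h ha hm
  by_cases hk : (P.zeroOcc a).1 = pre.length + 1
  swap
  · have hphi : phi pre.length x.length (P.zeroOcc a) = P.zeroOcc a := by
      unfold phi
      rw [if_neg]
      simp only [not_and]
      intro hh
      exact absurd hh hk
    rw [hz, hphi, S1 h h1 hk]
  · unfold Valid at hv
    have hv2 : (P.zeroOcc a).2 < x.length ∨ x.length + 2 ≤ (P.zeroOcc a).2 := by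
      tauto
    have hphi : phi pre.length x.length (P.zeroOcc a) = (pre.length + 1,
        if x.length ≤ (P.zeroOcc a).2 then (P.zeroOcc a).2 - 2
        else (P.zeroOcc a).2) := by
      unfold phi
      by_cases hn : x.length ≤ (P.zeroOcc a).2
      · rw [if_pos ⟨hk, hn⟩, if_pos hn, hk]
      · rw [if_neg (by tauto), if_neg hn]
        exact Prod.ext hk rfl
    rw [hz, hphi, hk, scp_P h, scp_P' h]
    exact xcore _ _
      (fun e he => by have := efm_pos_mem he; omega)
      (fun e he => by have := efm_pos_mem he; omega) hv2

/-- All letters appearing in `xword P a` are distinct from `A`. -/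
theorem xword_clean {a : ℕ} {e : ℕ × Bool} (he : e ∈ P.xword a) : e.1 ≠ A := by
  unfold NanophraseV.xword at he
  rw [List.mem_map] at he
  obtain ⟨e', he', rfl⟩ := he
  exact scp_clean h (List.mem_of_mem_filter he')

theorem signedComp_clean {i : ℕ} {e : ℕ × Bool} (he : e ∈ P.signedComp i) :
    e.1 ≠ A := by
  unfold NanophraseV.signedComp at he
  rw [List.mem_map] at he
  obtain ⟨e', he', rfl⟩ := he
  exact scp_clean h he'

theorem rho_clean : ∀ (q : ℕ) {w : List (ℕ × Bool)},
    (∀ e ∈ w, e.1 ≠ A) → ∀ e ∈ P.rho (q + 2) w, e.1 ≠ A := by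
  intro q
  induction q with
  | zero => intro w hw e he; exact hw e he
  | succ q ih =>
    intro w hw e he
    have : q + 1 + 2 = q + 3 := rfl
    rw [this] at he
    simp only [NanophraseV.rho] at he
    rw [List.mem_flatMap] at he
    obtain ⟨f, hf, he⟩ := he
    simp only [List.mem_append, List.mem_cons] at he
    rcases he with he | he | he
    · unfold NanophraseV.wInv at he
      rw [List.mem_map] at he
      obtain ⟨e', he', rfl⟩ := he
      rw [List.mem_reverse] at he'
      exact ih (fun g hg => xword_clean h hg) e' he'
    · rw [he]; exact hw f hf
    · exact ih (fun g hg => xword_clean h hg) e he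

theorem rho_eq : ∀ (q : ℕ) (w : List (ℕ × Bool)),
    (∀ e ∈ w, e.1 ≠ A) → P'.rho (q + 2) w = P.rho (q + 2) w := by
  intro q
  induction q with
  | zero => intro w _; rfl
  | succ q ih =>
    intro w hw
    have h3 : q + 1 + 2 = q + 3 := rfl
    rw [h3]
    simp only [NanophraseV.rho]
    apply List.flatMap_congr
    intro e he
    have hA := hw e he
    rw [xword_eq h hA, ih _ fun g hg => xword_clean h hg]

theorem phiEta_eq {m : List (ℕ × Bool)} (hm : ∀ e ∈ m, e.1 ≠ A) :
    P'.phiEta m = P.phiEta m := by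
  unfold NanophraseV.phiEta
  congr 1
  apply List.map_congr_left
  intro e he
  rw [eta_eq h (hm e he)]

theorem mu_eq (cs : List ℕ) {i : ℕ} (hi : 1 ≤ i) : P.mu cs i = P'.mu cs i := by
  unfold NanophraseV.mu
  rw [signedComp_eq h hi, rho_eq h cs.length _ (fun e he => signedComp_clean h he),
    phiEta_eq h (rho_clean h cs.length (fun e he => signedComp_clean h he))]

end Move4
end H1Aux

/-- `μ` is invariant under H1 moves: if the nanophrases
`P` and `P'` over `α_v` are related by an H1 move (deletion of a subword
`AA` within one component), then for every sequence `c₁, …, c_u, i` of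
integers between `1` and `n`, `μ(P; c₁,…,c_u,i) = μ(P'; c₁,…,c_u,i)`. -/
theorem mu_h1_invariant (P P' : NanophraseV)
    (hP : P.IsGauss) (hP' : P'.IsGauss)
    (hmove : ∃ (pre post : List (List ℕ)) (x y : List ℕ) (A : ℕ),
      P.comps = pre ++ (x ++ A :: A :: y) :: post ∧
      P'.comps = pre ++ (x ++ y) :: post ∧
      P'.proj = P.proj)
    (cs : List ℕ) (i : ℕ)
    (hcs : ∀ c ∈ cs, 1 ≤ c ∧ c ≤ P.comps.length)
    (hi : 1 ≤ i ∧ i ≤ P.comps.length) :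
    P.mu cs i = P'.mu cs i := by
  obtain ⟨pre, post, x, y, A, hc, hc', hpr⟩ := hmove
  exact H1Aux.mu_eq ⟨hc, hc', hpr, hP⟩ cs hi.1
end

section
/- μ is invariant under self crossing moves: if p' is obtained from p by changing |A| to σ_v(|A|) for a letter A appearing twice in a single component (where σ_v swaps a₊↔a₋ and b₊↔b₋), then μ(p;c₁,…,c_u,i) = μ(p';c₁,…,c_u,i) for every sequence c₁,…,c_u,i. -/
/-- The involution `σ_v` on `α_v`, swapping `a₊ ↔ a₋` and `b₊ ↔ b₋`. -/
def sigmaV : AlphaV → AlphaV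
  | AlphaV.ap => AlphaV.am
  | AlphaV.am => AlphaV.ap
  | AlphaV.bp => AlphaV.bm
  | AlphaV.bm => AlphaV.bp


section SelfCrossingAux

namespace NanophraseV

/-! ### Occurrences of a letter appearing twice in one component -/

private def contrib (A k : ℕ) (c : List ℕ) : List (ℕ × ℕ) :=
  (c.zipIdx.map Prod.swap).filterMap fun jb => if jb.2 = A then some (k + 1, jb.1) else none

private lemma contrib_length_aux (A : ℕ) (k : ℕ) :
    ∀ (c : List ℕ) (m : ℕ),
      (((c.zipIdx m).map Prod.swap).filterMap fun jb =>
        if jb.2 = A then some (k + 1, jb.1) else none).length = c.count A := by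
  intro c
  induction c with
  | nil => intro m; simp
  | cons b t ih =>
    intro m
    by_cases hb : b = A
    all_goals simp only [List.filterMap_map, Function.comp_def, Prod.fst_swap, Prod.snd_swap] at ih
    · simp [List.zipIdx_cons, List.filterMap_cons, hb, ih, List.count_cons]
    · simp [List.zipIdx_cons, List.filterMap_cons, hb, ih, List.count_cons, Ne.symm hb]

private lemma contrib_length (A k : ℕ) (c : List ℕ) :
    (contrib A k c).length = c.count A := by
  simpa [contrib] using contrib_length_aux A k c 0

private lemma contrib_fst (A k : ℕ) (c : List ℕ) :
    ∀ e ∈ contrib A k c, e.1 = k + 1 := by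
  intro e he
  rcases List.mem_filterMap.1 he with ⟨jb, _, hjb⟩
  by_cases h : jb.2 = A
  · simp [h] at hjb; rw [← hjb]
  · simp [h] at hjb

private lemma enumFrom_flatMap_split (F : ℕ × List ℕ → List (ℕ × ℕ)) (c : List ℕ)
    (post : List (List ℕ)) :
    ∀ (pre : List (List ℕ)) (n : ℕ),
      (((pre ++ c :: post).zipIdx n).map Prod.swap).flatMap F
        = ((pre.zipIdx n).map Prod.swap).flatMap F ++ F (n + pre.length, c)
            ++ ((post.zipIdx (n + pre.length + 1)).map Prod.swap).flatMap F := by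
  intro pre
  induction pre with
  | nil => intro n; simp [List.zipIdx_cons]
  | cons b t ih =>
    intro n
    have e1 : n + (t.length + 1) = (n + 1) + t.length := by omega
    have e2 : n + (t.length + 1) + 1 = (n + 1) + t.length + 1 := by omega
    simp only [List.cons_append, List.zipIdx_cons, List.map_cons, List.flatMap_cons, List.length_cons,
      e1, e2, List.append_eq, ih (n + 1), List.append_assoc]

private lemma occs_split (A : ℕ) (pre : List (List ℕ)) (c : List ℕ)
    (post : List (List ℕ)) (f : ℕ → AlphaV) :
    ∃ l₁ l₂ : List (ℕ × ℕ),
      NanophraseV.occs ⟨pre ++ c :: post, f⟩ A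
        = l₁ ++ contrib A pre.length c ++ l₂ := by
  classical
  refine ⟨((pre.zipIdx 0).map Prod.swap).flatMap (fun iw => (iw.2.zipIdx.map Prod.swap).filterMap fun jb =>
      if jb.2 = A then some (iw.1 + 1, jb.1) else none),
    ((post.zipIdx (0 + pre.length + 1)).map Prod.swap).flatMap (fun iw => (iw.2.zipIdx.map Prod.swap).filterMap fun jb =>
      if jb.2 = A then some (iw.1 + 1, jb.1) else none), ?_⟩
  have h := enumFrom_flatMap_split
    (fun iw => (iw.2.zipIdx.map Prod.swap).filterMap fun jb =>
      if jb.2 = A then some (iw.1 + 1, jb.1) else none) c post pre 0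
  unfold NanophraseV.occs
  rw [h]
  congr 2
  simp [contrib]

/-- If `A` appears twice inside a single component of a Gauss phrase, then
its two occurrences lie in the same component. -/
private lemma fstOcc_fst_eq_sndOcc_fst (P : NanophraseV) (hP : P.IsGauss) (A : ℕ)
    (hA : ∃ (pre post : List (List ℕ)) (x y z : List ℕ),
      P.comps = pre ++ (x ++ A :: y ++ A :: z) :: post) :
    (P.fstOcc A).1 = (P.sndOcc A).1 := by
  classical
  obtain ⟨pre, post, x, y, z, hco⟩ := hA
  set c : List ℕ := x ++ A :: y ++ A :: z with hcdef
  have hmem : A ∈ P.comps.flatten := by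
    rw [hco]; simp [hcdef]
  have hlen : (P.occs A).length = 2 := hP A hmem
  have hPocc : P.occs A = NanophraseV.occs ⟨pre ++ c :: post, P.proj⟩ A := by
    unfold NanophraseV.occs; rw [hco]
  obtain ⟨l₁, l₂, hsplit⟩ := occs_split A pre c post P.proj
  have hc2 : 2 ≤ (contrib A pre.length c).length := by
    rw [contrib_length]
    simp [hcdef, List.count_append, List.count_cons]
    omega
  have hlens : l₁.length + (contrib A pre.length c).length + l₂.length = 2 := by
    have := hlen
    rw [hPocc, hsplit] at this
    simp at this
    omega
  have hl₁ : l₁ = [] := List.length_eq_zero_iff.1 (by omega)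
  have hl₂ : l₂ = [] := List.length_eq_zero_iff.1 (by omega)
  have hocc : P.occs A = contrib A pre.length c := by
    rw [hPocc, hsplit, hl₁, hl₂]; simp
  have hlen2 : (P.occs A).length = 2 := hlen
  obtain ⟨e₁, e₂, he⟩ := List.length_eq_two.1 hlen2
  have h₁ : e₁.1 = pre.length + 1 := by
    apply contrib_fst A pre.length c
    rw [← hocc, he]; simp
  have h₂ : e₂.1 = pre.length + 1 := by
    apply contrib_fst A pre.length c
    rw [← hocc, he]; simp
  unfold fstOcc sndOcc
  rw [he]
  simp [h₁, h₂]

/-! ### Congruence lemmas for phrases differing only in the projection of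
a letter whose occurrences lie in one component -/

variable {P Q : NanophraseV} {A : ℕ}

private lemma occs_congr (hc : Q.comps = P.comps) (a : ℕ) : Q.occs a = P.occs a := by
  unfold occs; rw [hc]

private lemma fstOcc_congr (hc : Q.comps = P.comps) (a : ℕ) :
    Q.fstOcc a = P.fstOcc a := by
  unfold fstOcc; rw [occs_congr hc]

private lemma sndOcc_congr (hc : Q.comps = P.comps) (a : ℕ) :
    Q.sndOcc a = P.sndOcc a := by
  unfold sndOcc; rw [occs_congr hc]

private lemma entrySign_congr (hc : Q.comps = P.comps)
    (hp : ∀ a, a ≠ A → Q.proj a = P.proj a)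
    (hsame : (P.fstOcc A).1 = (P.sndOcc A).1)
    (i j a : ℕ) : Q.entrySign i j a = P.entrySign i j a := by
  unfold entrySign
  rw [fstOcc_congr hc, sndOcc_congr hc]
  by_cases h : a = A
  · subst h
    rw [if_pos hsame, if_pos hsame]
  · rw [hp a h]

private lemma entrySign_self (hsame : (P.fstOcc A).1 = (P.sndOcc A).1)
    (i j : ℕ) : P.entrySign i j A = none := by
  unfold entrySign
  rw [if_pos hsame]

private lemma signedCompPos_congr (hc : Q.comps = P.comps)
    (hp : ∀ a, a ≠ A → Q.proj a = P.proj a)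
    (hsame : (P.fstOcc A).1 = (P.sndOcc A).1)
    (i : ℕ) : Q.signedCompPos i = P.signedCompPos i := by
  unfold signedCompPos
  rw [hc]
  congr 1
  funext jb
  rw [entrySign_congr hc hp hsame]

private lemma signedCompPos_ne (hsame : (P.fstOcc A).1 = (P.sndOcc A).1)
    {i : ℕ} {e : ℕ × ℕ × Bool} (he : e ∈ P.signedCompPos i) : e.2.1 ≠ A := by
  rcases List.mem_filterMap.1 he with ⟨jb, _, hjb⟩
  rcases Option.map_eq_some_iff.1 hjb with ⟨s, hs, hes⟩
  intro hcontra
  have : jb.2 = A := by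
    rw [← hes] at hcontra
    exact hcontra
  rw [this, entrySign_self hsame] at hs
  cases hs

private lemma zeroOcc_congr (hc : Q.comps = P.comps)
    (hp : ∀ a, a ≠ A → Q.proj a = P.proj a)
    {a : ℕ} (ha : a ≠ A) : Q.zeroOcc a = P.zeroOcc a := by
  unfold zeroOcc
  rw [hp a ha, fstOcc_congr hc, sndOcc_congr hc]

private lemma eta_congr (hc : Q.comps = P.comps)
    (hp : ∀ a, a ≠ A → Q.proj a = P.proj a)
    {a : ℕ} (ha : a ≠ A) : Q.eta a = P.eta a := by
  unfold eta
  rw [zeroOcc_congr hc hp ha]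

private lemma xword_congr (hc : Q.comps = P.comps)
    (hp : ∀ a, a ≠ A → Q.proj a = P.proj a)
    (hsame : (P.fstOcc A).1 = (P.sndOcc A).1)
    {a : ℕ} (ha : a ≠ A) : Q.xword a = P.xword a := by
  unfold xword
  rw [zeroOcc_congr hc hp ha, signedCompPos_congr hc hp hsame]

/-- All letters of a word avoid `A`. -/
private def Avoids (A : ℕ) (w : List (ℕ × Bool)) : Prop := ∀ e ∈ w, e.1 ≠ A

private lemma avoids_xword (hsame : (P.fstOcc A).1 = (P.sndOcc A).1) (a : ℕ) :
    Avoids A (P.xword a) := by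
  intro e he
  unfold xword at he
  rcases List.mem_map.1 he with ⟨f, hf, hfe⟩
  have hf' : f ∈ P.signedCompPos (P.zeroOcc a).1 := List.mem_of_mem_filter hf
  have := signedCompPos_ne hsame hf'
  rw [← hfe]
  exact this

private lemma avoids_wInv {w : List (ℕ × Bool)} (hw : Avoids A w) :
    Avoids A (wInv w) := by
  intro e he
  rcases List.mem_map.1 he with ⟨f, hf, hfe⟩
  have := hw f (List.mem_reverse.1 hf)
  rw [← hfe]
  exact this

private lemma avoids_append {w v : List (ℕ × Bool)} (hw : Avoids A w)
    (hv : Avoids A v) : Avoids A (w ++ v) := by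
  intro e he
  rcases List.mem_append.1 he with h | h
  · exact hw e h
  · exact hv e h

private lemma flatMap_congr' {α β : Type} {w : List α} {f g : α → List β}
    (h : ∀ e ∈ w, f e = g e) : w.flatMap f = w.flatMap g := by
  induction w with
  | nil => rfl
  | cons b t ih =>
    simp only [List.flatMap_cons]
    rw [h b (List.mem_cons_self), ih fun e he => h e (List.mem_cons_of_mem b he)]

private lemma rho_congr (hc : Q.comps = P.comps)
    (hp : ∀ a, a ≠ A → Q.proj a = P.proj a)
    (hsame : (P.fstOcc A).1 = (P.sndOcc A).1) :
    ∀ (q : ℕ) (w : List (ℕ × Bool)), Avoids A w →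
      Q.rho q w = P.rho q w ∧ Avoids A (P.rho q w) := by
  intro q
  induction q with
  | zero => intro w hw; exact ⟨rfl, hw⟩
  | succ n ih =>
    match n with
    | 0 => intro w hw; exact ⟨rfl, hw⟩
    | 1 => intro w hw; exact ⟨rfl, hw⟩
    | Nat.succ (Nat.succ m) =>
      intro w hw
      show Q.rho (m + 3) w = P.rho (m + 3) w ∧ Avoids A (P.rho (m + 3) w)
      constructor
      · show w.flatMap _ = w.flatMap _
        apply flatMap_congr'
        intro e he
        have hea : e.1 ≠ A := hw e he
        have hx : Q.xword e.1 = P.xword e.1 := xword_congr hc hp hsame hea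
        have hax : Avoids A (P.xword e.1) := avoids_xword hsame e.1
        have hr := ih (P.xword e.1) hax
        rw [hx, hr.1]
      · intro f hf
        unfold rho at hf
        rcases List.mem_flatMap.1 hf with ⟨e, he, hfe⟩
        have hea : e.1 ≠ A := hw e he
        have hax : Avoids A (P.xword e.1) := avoids_xword hsame e.1
        have hr := (ih (P.xword e.1) hax).2
        rcases List.mem_append.1 hfe with h | h
        · exact avoids_wInv hr f h
        · rcases List.mem_cons.1 h with h' | h'
          · rw [h']; exact hea
          · exact hr f h'

private lemma phiEta_congr (hc : Q.comps = P.comps)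
    (hp : ∀ a, a ≠ A → Q.proj a = P.proj a)
    {m : List (ℕ × Bool)} (hm : Avoids A m) : Q.phiEta m = P.phiEta m := by
  unfold phiEta
  congr 1
  apply List.map_congr_left
  intro e he
  rw [eta_congr hc hp (hm e he)]

private lemma signedComp_congr (hc : Q.comps = P.comps)
    (hp : ∀ a, a ≠ A → Q.proj a = P.proj a)
    (hsame : (P.fstOcc A).1 = (P.sndOcc A).1)
    (i : ℕ) : Q.signedComp i = P.signedComp i := by
  unfold signedComp
  rw [signedCompPos_congr hc hp hsame]

private lemma avoids_signedComp (hsame : (P.fstOcc A).1 = (P.sndOcc A).1)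
    (i : ℕ) : Avoids A (P.signedComp i) := by
  intro e he
  rcases List.mem_map.1 he with ⟨f, hf, hfe⟩
  have := signedCompPos_ne hsame hf
  rw [← hfe]
  exact this

private lemma mu_congr (hc : Q.comps = P.comps)
    (hp : ∀ a, a ≠ A → Q.proj a = P.proj a)
    (hsame : (P.fstOcc A).1 = (P.sndOcc A).1)
    (cs : List ℕ) (i : ℕ) : Q.mu cs i = P.mu cs i := by
  unfold mu
  rw [signedComp_congr hc hp hsame]
  have hav := avoids_signedComp hsame i
  obtain ⟨hr, har⟩ := rho_congr hc hp hsame (cs.length + 2) (P.signedComp i) hav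
  rw [hr]
  exact congrFun (phiEta_congr hc hp har) cs

end NanophraseV

end SelfCrossingAux

/-- `μ` is invariant under self crossing moves: if `P'`
is obtained from `P` by changing `|A|` to `σ_v(|A|)` for a letter `A`
appearing twice in a single component, then
`μ(P; c₁,…,c_u,i) = μ(P'; c₁,…,c_u,i)` for every sequence `c₁,…,c_u,i`. -/
theorem mu_selfCrossing_invariant (P : NanophraseV) (hP : P.IsGauss)
    (A : ℕ)
    (hA : ∃ (pre post : List (List ℕ)) (x y z : List ℕ),
      P.comps = pre ++ (x ++ A :: y ++ A :: z) :: post)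
    (cs : List ℕ) (i : ℕ) :
    P.mu cs i
      = NanophraseV.mu
          ⟨P.comps, Function.update P.proj A (sigmaV (P.proj A))⟩ cs i := by
  have hsame := NanophraseV.fstOcc_fst_eq_sndOcc_fst P hP A hA
  exact (NanophraseV.mu_congr (P := P) (Q := ⟨P.comps, Function.update P.proj A (sigmaV (P.proj A))⟩)
    rfl (fun a ha => Function.update_of_ne ha _ _) hsame cs i).symm
end
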